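/- arXiv:2001.00801 — 7 statements merged into one kernel-verified Lean document; each statement's English description precedes it below -/
import Mathlib

section
/- Let δ ≥ 0, C > 0 and γ > 2Cδ + δ². Suppose sup_{i,k} |W_{ik} − W̃_{ik}| ≤ δ, that 0 ≤ W_{ik} ≤ C for all i, k, and that inf_i D_{ii}/(mn) > γ. Then the spectral norm satisfies ‖D^{-1/2} W − D̃^{-1/2} W̃‖₂ ≤ δ/√γ + (2Cδ + δ²)(C + δ) / ( γ·√(γ − 2Cδ − δ²) + √γ·(γ − 2Cδ − δ²) ). -/
/-!
Scaled by `√(mn)`, the `(i, k)` entry of `D^{-1/2} W − D̃^{-1/2} W̃` is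
`W_{ik} / √x_i − W̃_{ik} / √y_i` with normalized degrees `x_i = D_{ii}/(mn) > γ` and
`y_i = D̃_{ii}/(mn)`. Each product `W_{ik} W_{jk}` moves by at most `ε = 2Cδ + δ²`, so
`|x_i − y_i| ≤ ε`, and `x^{-1/2} − y^{-1/2} = (y − x) / (x√y + √x y)` controls the change of
the normalizing factors. Splitting the entry as
`(W_{ik} − W̃_{ik}) / √x_i + (x_i^{-1/2} − y_i^{-1/2}) W̃_{ik}` bounds it by the right-hand side
`c`; as there are `mn` entries, the Frobenius norm, and with it the spectral norm, is at most `c`.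
-/

open scoped BigOperators

/-- The spectral (ℓ²-operator) norm of a real matrix. -/
noncomputable def specNorm {n m : ℕ} (A : Matrix (Fin n) (Fin m) ℝ) : ℝ :=
  ‖LinearMap.toContinuousLinearMap (Matrix.toEuclideanLin A)‖

theorem specNorm_le_sqrt_sum_sq {n m : ℕ} (A : Matrix (Fin n) (Fin m) ℝ) :
    specNorm A ≤ √(∑ i, ∑ k, A i k ^ 2) := by
  refine ContinuousLinearMap.opNorm_le_bound _ (Real.sqrt_nonneg _) fun x => ?_
  change ‖Matrix.toEuclideanLin A x‖ ≤ _
  rw [EuclideanSpace.norm_eq, EuclideanSpace.norm_eq, ← Real.sqrt_mul (by positivity)]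
  refine Real.sqrt_le_sqrt ?_
  simp only [Real.norm_eq_abs, sq_abs, Matrix.toLpLin_apply, Matrix.mulVec, dotProduct]
  rw [Finset.sum_mul]
  exact Finset.sum_le_sum fun i _ => Finset.sum_mul_sq_le_sq_mul_sq _ _ _

theorem specNorm_le_of_sqrt_mul_abs_le {n m : ℕ} {A : Matrix (Fin n) (Fin m) ℝ} {c : ℝ}
    (hc : 0 ≤ c) (h : ∀ i k, √(n * m) * |A i k| ≤ c) : specNorm A ≤ c := by
  refine (specNorm_le_sqrt_sum_sq A).trans (Real.sqrt_le_iff.2 ⟨hc, ?_⟩)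
  have hentry : ∀ i k, A i k ^ 2 ≤ c ^ 2 / (n * m) := fun i k => by
    have hnm : (0 : ℝ) < n * m := mul_pos (Nat.cast_pos.2 i.pos) (Nat.cast_pos.2 k.pos)
    rw [le_div_iff₀ hnm, ← sq_abs, ← Real.sq_sqrt hnm.le, ← mul_pow, mul_comm]
    exact pow_le_pow_left₀ (by positivity) (h i k) 2
  calc ∑ i, ∑ k, A i k ^ 2 ≤ ∑ _i : Fin n, ∑ _k : Fin m, c ^ 2 / (n * m) :=
        Finset.sum_le_sum fun i _ => Finset.sum_le_sum fun k _ => hentry i k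
    _ = (n * m) * (c ^ 2 / (n * m)) := by simp [mul_assoc]
    _ ≤ c ^ 2 := by
        rcases (by positivity : (0 : ℝ) ≤ n * m).eq_or_lt with h0 | h0
        · simp [← h0, sq_nonneg]
        · rw [mul_div_cancel₀ _ h0.ne']

theorem abs_sum_sum_sub_sum_sum_le {ι κ : Type*} [Fintype ι] [Fintype κ] {f g : ι → κ → ℝ}
    {b : ℝ} (h : ∀ j k, |f j k - g j k| ≤ b) :
    |∑ j, ∑ k, f j k - ∑ j, ∑ k, g j k| ≤ Fintype.card ι * Fintype.card κ * b := by
  rw [← Fintype.sum_prod_type', ← Fintype.sum_prod_type', ← Finset.sum_sub_distrib]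
  refine (Finset.abs_sum_le_sum_abs _ _).trans ?_
  refine (Finset.sum_le_card_nsmul _ _ b fun p _ => h p.1 p.2).trans_eq ?_
  simp [mul_assoc]

theorem abs_le_add_of_abs_sub_le {a a' C δ : ℝ} (ha : |a| ≤ C) (h : |a - a'| ≤ δ) :
    |a'| ≤ C + δ := by
  have := abs_sub_abs_le_abs_sub a' a
  rw [abs_sub_comm] at this
  linarith

theorem abs_mul_sub_mul_le {a b a' b' C δ : ℝ} (ha : |a| ≤ C) (hb : |b| ≤ C)
    (haa' : |a - a'| ≤ δ) (hbb' : |b - b'| ≤ δ) : |a * b - a' * b'| ≤ 2 * C * δ + δ ^ 2 := by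
  have hδ : 0 ≤ δ := (abs_nonneg _).trans haa'
  calc |a * b - a' * b'| = |(a - a') * b + a' * (b - b')| := by congr 1; ring
    _ ≤ |a - a'| * |b| + |a'| * |b - b'| := by
        rw [← abs_mul, ← abs_mul]; exact abs_add_le _ _
    _ ≤ δ * C + (C + δ) * δ := by
        have ha' := abs_le_add_of_abs_sub_le ha haa'
        have hC : 0 ≤ C := (abs_nonneg _).trans ha
        gcongr
    _ = 2 * C * δ + δ ^ 2 := by ring

theorem inv_sqrt_sub_inv_sqrt {x y : ℝ} (hx : 0 < x) (hy : 0 < y) :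
    (√x)⁻¹ - (√y)⁻¹ = (y - x) / (x * √y + √x * y) := by
  have hsx := Real.sqrt_pos.2 hx
  have hsy := Real.sqrt_pos.2 hy
  rw [eq_div_iff (by positivity)]
  field_simp
  linear_combination x * Real.sq_sqrt hy.le - y * Real.sq_sqrt hx.le

theorem abs_inv_sqrt_sub_inv_sqrt_le {p q x y : ℝ} (hp : 0 < p) (hq : 0 < q) (hpx : p ≤ x)
    (hqy : q ≤ y) : |(√x)⁻¹ - (√y)⁻¹| ≤ |x - y| / (p * √q + √p * q) := by
  have hx := hp.trans_le hpx
  have hy := hq.trans_le hqy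
  have hden : 0 < x * √y + √x * y := by positivity
  rw [inv_sqrt_sub_inv_sqrt hx hy, abs_div, abs_of_pos hden, abs_sub_comm y x]
  gcongr

theorem abs_inv_sqrt_mul_sub_inv_sqrt_mul_le {γ ε δ B x y w w' : ℝ} (hγε : 0 < γ - ε)
    (hγx : γ ≤ x) (hxy : |x - y| ≤ ε) (hww' : |w - w'| ≤ δ) (hw' : |w'| ≤ B) :
    |(√x)⁻¹ * w - (√y)⁻¹ * w'| ≤
      δ / √γ + ε * B / (γ * √(γ - ε) + √γ * (γ - ε)) := by
  have hγ : 0 < γ := by linarith [(abs_nonneg _).trans hxy]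
  have hγεy : γ - ε ≤ y := by linarith [le_abs_self (x - y)]
  have hinv : |(√x)⁻¹ - (√y)⁻¹| ≤ ε / (γ * √(γ - ε) + √γ * (γ - ε)) :=
    (abs_inv_sqrt_sub_inv_sqrt_le hγ hγε hγx hγεy).trans (by gcongr)
  calc |(√x)⁻¹ * w - (√y)⁻¹ * w'| = |(√x)⁻¹ * (w - w') + ((√x)⁻¹ - (√y)⁻¹) * w'| := by
        congr 1; ring
    _ ≤ |(√x)⁻¹ * (w - w')| + |((√x)⁻¹ - (√y)⁻¹) * w'| := abs_add_le _ _
    _ = (√x)⁻¹ * |w - w'| + |(√x)⁻¹ - (√y)⁻¹| * |w'| := by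
        rw [abs_mul, abs_mul, abs_of_pos (inv_pos.2 (Real.sqrt_pos.2 (hγ.trans_le hγx)))]
    _ ≤ (√γ)⁻¹ * δ + ε / (γ * √(γ - ε) + √γ * (γ - ε)) * B := by
        have hB : 0 ≤ B := (abs_nonneg _).trans hw'
        have hε : 0 ≤ ε := (abs_nonneg _).trans hxy
        gcongr
    _ = δ / √γ + ε * B / (γ * √(γ - ε) + √γ * (γ - ε)) := by ring

theorem sqrt_mul_inv_sqrt {N x : ℝ} (hN : 0 ≤ N) : √N * (√x)⁻¹ = (√(x / N))⁻¹ := by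
  rw [Real.sqrt_div' x hN, inv_div, div_eq_mul_inv]

theorem roseland_opnorm_stability_general
    {n m : ℕ}
    (W Wt : Matrix (Fin n) (Fin m) ℝ)
    (δ C γ : ℝ) (hδ : 0 ≤ δ) (hC : 0 < C)
    (hγ : 2 * C * δ + δ ^ 2 < γ)
    (D Dt : Fin n → ℝ)
    (hD : ∀ i, D i = ∑ j, ∑ k, W i k * W j k)
    (hDt : ∀ i, Dt i = ∑ j, ∑ k, Wt i k * Wt j k)
    (hWnonneg : ∀ i k, 0 ≤ W i k) (hWle : ∀ i k, W i k ≤ C)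
    (hclose : ∀ i k, |W i k - Wt i k| ≤ δ)
    (hdeg : ∀ i, γ < D i / (m * n)) :
    specNorm (Matrix.diagonal (fun i => (Real.sqrt (D i))⁻¹) * W -
        Matrix.diagonal (fun i => (Real.sqrt (Dt i))⁻¹) * Wt) ≤
      δ / Real.sqrt γ +
        (2 * C * δ + δ ^ 2) * (C + δ) /
          (γ * Real.sqrt (γ - 2 * C * δ - δ ^ 2) +
            Real.sqrt γ * (γ - 2 * C * δ - δ ^ 2)) := by
  rw [sub_sub]
  set ε := 2 * C * δ + δ ^ 2
  have hγε : 0 < γ - ε := sub_pos.2 hγ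
  have hγ0 : 0 < γ := (by positivity : 0 ≤ ε).trans_lt hγ
  have hW : ∀ i k, |W i k| ≤ C := fun i k => (abs_of_nonneg (hWnonneg i k)).trans_le (hWle i k)
  refine specNorm_le_of_sqrt_mul_abs_le (by positivity) fun i k => ?_
  have hN : (0 : ℝ) < m * n := mul_pos (Nat.cast_pos.2 k.pos) (Nat.cast_pos.2 i.pos)
  have hdeg_close : |D i / (m * n) - Dt i / (m * n)| ≤ ε := by
    rw [← sub_div, abs_div, abs_of_pos hN, div_le_iff₀ hN, hD, hDt]
    refine (abs_sum_sum_sub_sum_sum_le fun j k =>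
      abs_mul_sub_mul_le (hW i k) (hW j k) (hclose i k) (hclose j k)).trans_eq ?_
    simp only [Fintype.card_fin]
    ring
  calc _ = |(√(D i / (m * n)))⁻¹ * W i k - (√(Dt i / (m * n)))⁻¹ * Wt i k| := by
        rw [← abs_of_nonneg (Real.sqrt_nonneg (n * m)), ← abs_mul, mul_comm (n : ℝ),
          ← sqrt_mul_inv_sqrt hN.le, ← sqrt_mul_inv_sqrt hN.le]
        simp only [Matrix.sub_apply, Matrix.diagonal_mul]
        congr 1; ring
    _ ≤ _ := abs_inv_sqrt_mul_sub_inv_sqrt_mul_le hγε (hdeg i).le hdeg_close (hclose i k)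
        (abs_le_add_of_abs_sub_le (hW i k) (hclose i k))

/-- Spectral-norm stability of the Roseland normalized landmark-affinity matrix
(Lemma on `‖D^{-1/2} W − D̃^{-1/2} W̃‖₂`). -/
theorem roseland_opnorm_stability
    {n m : ℕ} (hn : 0 < n) (hm : 0 < m)
    (W Wt : Matrix (Fin n) (Fin m) ℝ)
    (δ C γ : ℝ) (hδ : 0 ≤ δ) (hC : 0 < C)
    (hγ : 2 * C * δ + δ ^ 2 < γ)
    (D Dt : Fin n → ℝ)
    (hD : ∀ i, D i = ∑ j, ∑ k, W i k * W j k)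
    (hDt : ∀ i, Dt i = ∑ j, ∑ k, Wt i k * Wt j k)
    (hDpos : ∀ i, 0 < D i) (hDtpos : ∀ i, 0 < Dt i)
    (hWnonneg : ∀ i k, 0 ≤ W i k) (hWle : ∀ i k, W i k ≤ C)
    (hclose : ∀ i k, |W i k - Wt i k| ≤ δ)
    (hdeg : ∀ i, γ < D i / (m * n)) :
    specNorm (Matrix.diagonal (fun i => (Real.sqrt (D i))⁻¹) * W -
        Matrix.diagonal (fun i => (Real.sqrt (Dt i))⁻¹) * Wt) ≤
      δ / Real.sqrt γ +
        (2 * C * δ + δ ^ 2) * (C + δ) /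
          (γ * Real.sqrt (γ - 2 * C * δ - δ ^ 2) +
            Real.sqrt γ * (γ - 2 * C * δ - δ ^ 2)) :=
  roseland_opnorm_stability_general W Wt δ C γ hδ hC hγ D Dt hD hDt hWnonneg hWle hclose hdeg
end

section
/- Let δ ≥ 0, C > 0 and γ > 2Cδ + δ². Suppose sup_{i,k} |W_{ik} − W̃_{ik}| ≤ δ, that 0 ≤ W_{ik} ≤ C for all i, k, and that inf_i D_{ii}/(mn) > γ. Then the Frobenius norm satisfies ‖D^{-1/2} W − D̃^{-1/2} W̃‖_F ≤ δ/√γ + (2Cδ + δ²)(C + δ) / ( γ·√(γ − 2Cδ − δ²) + √γ·(γ − 2Cδ − δ²) ). -/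
open scoped BigOperators

/-- The Frobenius norm of a real matrix. -/
noncomputable def frobNorm {n m : ℕ} (A : Matrix (Fin n) (Fin m) ℝ) : ℝ :=
  Real.sqrt (∑ i, ∑ j, (A i j) ^ 2)

/-! Write `D^{-1/2} W - D̃^{-1/2} W̃ = D^{-1/2} (W - W̃) + (D^{-1/2} - D̃^{-1/2}) W̃` and bound the
Frobenius norm of each summand by `√(mn)` times an entrywise bound. Each product `W_ik W_jk` moves
by at most `2Cδ + δ²`, so the degrees move by at most `mn (2Cδ + δ²)`, whence `D ≥ γ mn` and
`D̃ ≥ (γ - 2Cδ - δ²) mn`. The identity `x^{-1/2} - y^{-1/2} = (y - x) / (x √y + √x y)` bounds the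
change of the inverse square roots; at these lower bounds `x √y + √x y` is `(mn)^{3/2}` times the
denominator of the claimed bound. -/

section FrobeniusNorm

open scoped Matrix.Norms.Frobenius

theorem frobNorm_eq_norm {n m : ℕ} (A : Matrix (Fin n) (Fin m) ℝ) : frobNorm A = ‖A‖ := by
  simp [frobNorm, Matrix.frobenius_norm_def, Real.sqrt_eq_rpow]

theorem frobNorm_add_le {n m : ℕ} (A B : Matrix (Fin n) (Fin m) ℝ) :
    frobNorm (A + B) ≤ frobNorm A + frobNorm B := by
  simpa only [frobNorm_eq_norm] using norm_add_le A B

end FrobeniusNorm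

theorem Matrix.diagonal_mul_sub_diagonal_mul {l n R : Type*} [Fintype l] [DecidableEq l] [Ring R]
    (d d' : l → R) (A B : Matrix l n R) :
    diagonal d * A - diagonal d' * B =
      diagonal d * (A - B) + diagonal (fun i => d i - d' i) * B := by
  rw [Matrix.mul_sub, ← diagonal_sub, Matrix.sub_mul]; abel

theorem frobNorm_le_of_abs_le {n m : ℕ} {A : Matrix (Fin n) (Fin m) ℝ} {c : ℝ} (hc : 0 ≤ c)
    (hA : ∀ i j, |A i j| ≤ c / √(m * n)) : frobNorm A ≤ c := by
  refine Real.sqrt_le_iff.2 ⟨hc, ?_⟩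
  calc ∑ i, ∑ j, A i j ^ 2 ≤ ∑ _i : Fin n, ∑ _j : Fin m, c ^ 2 / (m * n) := by
        gcongr with i _ j _
        calc A i j ^ 2 = |A i j| ^ 2 := (sq_abs _).symm
          _ ≤ (c / √(m * n)) ^ 2 := by gcongr; exact hA i j
          _ = c ^ 2 / (m * n) := by rw [div_pow, Real.sq_sqrt (by positivity)]
    _ = (m * n) * (c ^ 2 / (m * n)) := by
        simp only [Finset.sum_const, Finset.card_univ, Fintype.card_fin, nsmul_eq_mul]; ring
    _ ≤ c ^ 2 := by
        rcases eq_or_ne ((m : ℝ) * n) 0 with h | h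
        · rw [h, zero_mul]; positivity
        · rw [mul_div_cancel₀ _ h]

theorem abs_inv_sqrt_sub_inv_sqrt_le_s1 {a b x y : ℝ} (ha : 0 < a) (hb : 0 < b) (hax : a ≤ x)
    (hby : b ≤ y) : |(√x)⁻¹ - (√y)⁻¹| ≤ |x - y| / (a * √b + √a * b) := by
  have hx := ha.trans_le hax
  have hy := hb.trans_le hby
  rw [inv_sqrt_sub_inv_sqrt hx hy, abs_div, abs_sub_comm y x,
    abs_of_pos (show 0 < x * √y + √x * y by positivity)]
  gcongr

theorem abs_inv_sqrt_sub_inv_sqrt_le_of_scaled {a b e N x y : ℝ} (ha : 0 < a) (hb : 0 < b)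
    (hN : 0 < N) (hx : a * N ≤ x) (hy : b * N ≤ y) (hxy : |x - y| ≤ N * e) :
    |(√x)⁻¹ - (√y)⁻¹| ≤ e / (a * √b + √a * b) / √N := by
  have hsN := Real.sqrt_pos.2 hN
  calc |(√x)⁻¹ - (√y)⁻¹| ≤ |x - y| / (a * N * √(b * N) + √(a * N) * (b * N)) :=
        abs_inv_sqrt_sub_inv_sqrt_le_s1 (by positivity) (by positivity) hx hy
    _ ≤ N * e / ((a * √b + √a * b) * N * √N) := by
        rw [Real.sqrt_mul ha.le, Real.sqrt_mul hb.le,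
          show a * N * (√b * √N) + √a * √N * (b * N) = (a * √b + √a * b) * N * √N by ring]
        gcongr
    _ = e / (a * √b + √a * b) / √N := by field_simp

theorem abs_inv_sqrt_mul_le {D w γ δ N : ℝ} (hγ : 0 < γ) (hN : 0 < N) (hD : γ * N ≤ D)
    (hw : |w| ≤ δ) : |(√D)⁻¹ * w| ≤ δ / √γ / √N := by
  have hδ : 0 ≤ δ := (abs_nonneg w).trans hw
  rw [abs_mul, abs_inv, abs_of_nonneg (Real.sqrt_nonneg D), div_div, ← Real.sqrt_mul hγ.le,
    inv_mul_eq_div]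
  gcongr

theorem abs_le_add_of_abs_sub_le_s1 {x x' C δ : ℝ} (hx : |x| ≤ C) (hxx' : |x - x'| ≤ δ) :
    |x'| ≤ C + δ := by
  linarith [abs_sub_abs_le_abs_sub x' x, abs_sub_comm x' x]

theorem abs_mul_sub_mul_le_s1 {x y x' y' C δ : ℝ} (hx : |x| ≤ C) (hy : |y| ≤ C)
    (hxx' : |x - x'| ≤ δ) (hyy' : |y - y'| ≤ δ) : |x * y - x' * y'| ≤ 2 * C * δ + δ ^ 2 := by
  have hC : 0 ≤ C := (abs_nonneg x).trans hx
  have hδ : 0 ≤ δ := (abs_nonneg _).trans hxx'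
  have hy' : |y'| ≤ C + δ := abs_le_add_of_abs_sub_le_s1 hy hyy'
  calc |x * y - x' * y'| = |x * (y - y') + (x - x') * y'| := by ring_nf
    _ ≤ |x| * |y - y'| + |x - x'| * |y'| := by
        rw [← abs_mul, ← abs_mul]; exact abs_add_le _ _
    _ ≤ C * δ + δ * (C + δ) := by gcongr
    _ = 2 * C * δ + δ ^ 2 := by ring

theorem abs_sum_sum_sub_sum_sum_le_s1 {n m : ℕ} (f g : Fin n → Fin m → ℝ) {e : ℝ}
    (h : ∀ j k, |f j k - g j k| ≤ e) :
    |∑ j, ∑ k, f j k - ∑ j, ∑ k, g j k| ≤ m * n * e := by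
  calc |∑ j, ∑ k, f j k - ∑ j, ∑ k, g j k| = |∑ j, ∑ k, (f j k - g j k)| := by
        simp only [Finset.sum_sub_distrib]
    _ ≤ ∑ j, ∑ k, |f j k - g j k| :=
        (Finset.abs_sum_le_sum_abs _ _).trans
          (Finset.sum_le_sum fun j _ => Finset.abs_sum_le_sum_abs _ _)
    _ ≤ ∑ _j : Fin n, ∑ _k : Fin m, e := by gcongr with j _ k _; exact h j k
    _ = m * n * e := by
        simp only [Finset.sum_const, Finset.card_univ, Fintype.card_fin, nsmul_eq_mul]; ring

theorem abs_sum_mul_sub_sum_mul_le {n m : ℕ} {W Wt : Matrix (Fin n) (Fin m) ℝ} {C δ : ℝ}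
    (hW : ∀ i k, |W i k| ≤ C) (hclose : ∀ i k, |W i k - Wt i k| ≤ δ) (i : Fin n) :
    |∑ j, ∑ k, W i k * W j k - ∑ j, ∑ k, Wt i k * Wt j k| ≤ m * n * (2 * C * δ + δ ^ 2) :=
  abs_sum_sum_sub_sum_sum_le_s1 _ _ fun j k =>
    abs_mul_sub_mul_le_s1 (hW i k) (hW j k) (hclose i k) (hclose j k)

theorem pos_of_lt_div_of_nonneg {a b γ : ℝ} (hγ : 0 ≤ γ) (hb : 0 ≤ b) (h : γ < a / b) :
    0 < b := by
  refine hb.lt_of_ne fun hb0 => ?_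
  rw [← hb0, div_zero] at h
  exact h.not_ge hγ

theorem roseland_frobnorm_stability_general
    {n m : ℕ}
    (W Wt : Matrix (Fin n) (Fin m) ℝ)
    (δ C γ : ℝ) (hδ : 0 ≤ δ) (hC : 0 < C)
    (hγ : 2 * C * δ + δ ^ 2 < γ)
    (D Dt : Fin n → ℝ)
    (hD : ∀ i, D i = ∑ j, ∑ k, W i k * W j k)
    (hDt : ∀ i, Dt i = ∑ j, ∑ k, Wt i k * Wt j k)
    (hWnonneg : ∀ i k, 0 ≤ W i k) (hWle : ∀ i k, W i k ≤ C)
    (hclose : ∀ i k, |W i k - Wt i k| ≤ δ)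
    (hdeg : ∀ i, γ < D i / (m * n)) :
    frobNorm (Matrix.diagonal (fun i => (Real.sqrt (D i))⁻¹) * W -
        Matrix.diagonal (fun i => (Real.sqrt (Dt i))⁻¹) * Wt) ≤
      δ / Real.sqrt γ +
        (2 * C * δ + δ ^ 2) * (C + δ) /
          (γ * Real.sqrt (γ - 2 * C * δ - δ ^ 2) +
            Real.sqrt γ * (γ - 2 * C * δ - δ ^ 2)) := by
  have hγ0 : 0 < γ := (by positivity : 0 ≤ 2 * C * δ + δ ^ 2).trans_lt hγ
  have hγε : 0 < γ - 2 * C * δ - δ ^ 2 := by linarith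
  have hW : ∀ i k, |W i k| ≤ C := fun i k => abs_le.2 ⟨by linarith [hWnonneg i k], hWle i k⟩
  have hN : ∀ i, 0 < (m : ℝ) * n := fun i =>
    pos_of_lt_div_of_nonneg hγ0.le (by positivity) (hdeg i)
  have hDlow : ∀ i, γ * (m * n) < D i := fun i => (lt_div_iff₀ (hN i)).1 (hdeg i)
  have hDdiff : ∀ i, |D i - Dt i| ≤ m * n * (2 * C * δ + δ ^ 2) := fun i => by
    rw [hD, hDt]; exact abs_sum_mul_sub_sum_mul_le hW hclose i
  have hDtlow : ∀ i, (γ - 2 * C * δ - δ ^ 2) * (m * n) < Dt i := fun i => by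
    linarith [(abs_le.1 (hDdiff i)).2, hDlow i]
  rw [Matrix.diagonal_mul_sub_diagonal_mul]
  refine (frobNorm_add_le _ _).trans (add_le_add
    (frobNorm_le_of_abs_le (by positivity) fun i k => ?_)
    (frobNorm_le_of_abs_le (by positivity) fun i k => ?_))
  · rw [Matrix.diagonal_mul]
    exact abs_inv_sqrt_mul_le hγ0 (hN i) (hDlow i).le (hclose i k)
  · have hΔ := abs_inv_sqrt_sub_inv_sqrt_le_of_scaled hγ0 hγε (hN i) (hDlow i).le (hDtlow i).le
      (hDdiff i)
    rw [Matrix.diagonal_mul, abs_mul, mul_div_right_comm, mul_div_right_comm]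
    exact mul_le_mul hΔ (abs_le_add_of_abs_sub_le_s1 (hW i k) (hclose i k)) (abs_nonneg _)
      ((abs_nonneg _).trans hΔ)

/-- Frobenius-norm stability of the Roseland normalized landmark-affinity matrix
(Lemma on `‖D^{-1/2} W − D̃^{-1/2} W̃‖_F`). -/
theorem roseland_frobnorm_stability
    {n m : ℕ} (hn : 0 < n) (hm : 0 < m)
    (W Wt : Matrix (Fin n) (Fin m) ℝ)
    (δ C γ : ℝ) (hδ : 0 ≤ δ) (hC : 0 < C)
    (hγ : 2 * C * δ + δ ^ 2 < γ)
    (D Dt : Fin n → ℝ)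
    (hD : ∀ i, D i = ∑ j, ∑ k, W i k * W j k)
    (hDt : ∀ i, Dt i = ∑ j, ∑ k, Wt i k * Wt j k)
    (hDpos : ∀ i, 0 < D i) (hDtpos : ∀ i, 0 < Dt i)
    (hWnonneg : ∀ i k, 0 ≤ W i k) (hWle : ∀ i k, W i k ≤ C)
    (hclose : ∀ i k, |W i k - Wt i k| ≤ δ)
    (hdeg : ∀ i, γ < D i / (m * n)) :
    frobNorm (Matrix.diagonal (fun i => (Real.sqrt (D i))⁻¹) * W -
        Matrix.diagonal (fun i => (Real.sqrt (Dt i))⁻¹) * Wt) ≤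
      δ / Real.sqrt γ +
        (2 * C * δ + δ ^ 2) * (C + δ) /
          (γ * Real.sqrt (γ - 2 * C * δ - δ ^ 2) +
            Real.sqrt γ * (γ - 2 * C * δ - δ ^ 2)) :=
  roseland_frobnorm_stability_general W Wt δ C γ hδ hC hγ D Dt hD hDt hWnonneg hWle hclose hdeg
end

section
/- Suppose v ∈ ℝⁿ is an eigenvector of the matrix U_n with eigenvalue λ ≠ 0, i.e., U_n v = λ v. Define f : M → ℝ by f(x) := ( Σ_{j=1}^{n} K̂(x, x_j) v_j ) / ( λ · Σ_{j=1}^{n} K̂(x, x_j) ). Then f is continuous, ρ_n f = v, and f is an eigenfunction of T̂ with eigenvalue λ, i.e., T̂ f = λ f. -/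
open scoped BigOperators

/-- The landmark kernel `K̂(x,y) = (1/m) Σ_j k(x,z_j) k(z_j,y)`. -/
noncomputable def Khat {M : Type*} (k : M → M → ℝ) {m : ℕ} (z : Fin m → M)
    (x y : M) : ℝ :=
  (1 / (m : ℝ)) * ∑ j, k x (z j) * k (z j) y

/-- The empirical degree function `d̂(x) = (1/n) Σ_i K̂(x, x_i)`. -/
noncomputable def dhat {M : Type*} (k : M → M → ℝ) {n m : ℕ}
    (x : Fin n → M) (z : Fin m → M) (p : M) : ℝ :=
  (1 / (n : ℝ)) * ∑ i, Khat k z p (x i)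

/-- The empirical landmark-diffusion operator
`(T̂ f)(x) = (1/n) Σ_i (K̂(x,x_i)/d̂(x)) f(x_i)`. -/
noncomputable def That {M : Type*} (k : M → M → ℝ) {n m : ℕ}
    (x : Fin n → M) (z : Fin m → M) (f : M → ℝ) (p : M) : ℝ :=
  (1 / (n : ℝ)) * ∑ i, (Khat k z p (x i) / dhat k x z p) * f (x i)

/-- The row-stochastic matrix `(U_n)_{ij} = K̂(x_i,x_j) / Σ_l K̂(x_i,x_l)`. -/
noncomputable def Umat {M : Type*} (k : M → M → ℝ) {n m : ℕ}
    (x : Fin n → M) (z : Fin m → M) : Matrix (Fin n) (Fin n) ℝ :=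
  fun i j => Khat k z (x i) (x j) / ∑ l, Khat k z (x i) (x l)

/-!
Write `S(p) = Σ_j K̂(p, x_j)` and `f(p) = (Σ_j K̂(p, x_j) v_j) / S(p) / λ`. At a sample point the
weighted average `(Σ_j K̂(x_i, x_j) v_j) / S(x_i)` is the `i`-th entry of `U_n v = λ v`, so
`f(x_i) = v_i`. The `1/n` factors of `T̂` and `d̂` cancel, so `(T̂ f)(p)` is the `K̂(p, ·)`-weighted
average of the values `f(x_i) = v_i`, which is `λ f(p)`. Continuity holds because `k > 0` makes
`S` positive.
-/

open Finset

section NystromExtension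

variable {M : Type*} {n : ℕ}

noncomputable def nystromExtension (K : M → M → ℝ) (x : Fin n → M) (lam : ℝ) (v : Fin n → ℝ)
    (p : M) : ℝ :=
  (∑ j, K p (x j) * v j) / (lam * ∑ j, K p (x j))

theorem nystromExtension_eq_div (K : M → M → ℝ) (x : Fin n → M) (lam : ℝ) (v : Fin n → ℝ)
    (p : M) :
    nystromExtension K x lam v p = (∑ j, K p (x j) * v j) / (∑ j, K p (x j)) / lam := by
  rw [nystromExtension, div_div, mul_comm]

theorem continuous_nystromExtension [TopologicalSpace M] {K : M → M → ℝ}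
    (hK : ∀ q, Continuous fun p => K p q) (x : Fin n → M)
    (hdeg : ∀ p, ∑ j, K p (x j) ≠ 0) (lam : ℝ) (v : Fin n → ℝ) :
    Continuous (nystromExtension K x lam v) := by
  simp_rw [funext (nystromExtension_eq_div K x lam v)]
  refine (Continuous.div ?_ ?_ hdeg).div_const lam
  · exact continuous_finsetSum _ fun j _ => (hK (x j)).mul continuous_const
  · exact continuous_finsetSum _ fun j _ => hK (x j)

theorem nystromExtension_apply_sample {K : M → M → ℝ} {x : Fin n → M} {lam : ℝ}
    (hlam : lam ≠ 0) {v : Fin n → ℝ}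
    (heig : ∀ i, (∑ j, K (x i) (x j) * v j) / (∑ j, K (x i) (x j)) = lam * v i) (i : Fin n) :
    nystromExtension K x lam v (x i) = v i := by
  rw [nystromExtension_eq_div, heig, mul_div_cancel_left₀ _ hlam]

end NystromExtension

section LandmarkKernel

variable {M : Type*} {n m : ℕ} {k : M → M → ℝ}

theorem Khat_pos (hm : 0 < m) (hkpos : ∀ a b, 0 < k a b) (z : Fin m → M) (p q : M) :
    0 < Khat k z p q := by
  have : Nonempty (Fin m) := Fin.pos_iff_nonempty.mp hm
  unfold Khat
  exact mul_pos (by positivity)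
    (sum_pos (fun j _ => mul_pos (hkpos _ _) (hkpos _ _)) univ_nonempty)

theorem sum_Khat_pos (hn : 0 < n) (hm : 0 < m) (hkpos : ∀ a b, 0 < k a b) (x : Fin n → M)
    (z : Fin m → M) (p : M) : 0 < ∑ j, Khat k z p (x j) := by
  have : Nonempty (Fin n) := Fin.pos_iff_nonempty.mp hn
  exact sum_pos (fun j _ => Khat_pos hm hkpos z p (x j)) univ_nonempty

theorem continuous_Khat_left [TopologicalSpace M] (hk : ∀ w, Continuous fun p => k p w)
    (z : Fin m → M) (q : M) : Continuous fun p => Khat k z p q := by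
  unfold Khat
  exact continuous_const.mul
    (continuous_finsetSum _ fun j _ => (hk (z j)).mul continuous_const)

theorem Umat_mulVec_apply (k : M → M → ℝ) (x : Fin n → M) (z : Fin m → M) (v : Fin n → ℝ)
    (i : Fin n) :
    (Umat k x z).mulVec v i = (∑ j, Khat k z (x i) (x j) * v j) / ∑ j, Khat k z (x i) (x j) := by
  simp only [Matrix.mulVec, dotProduct, Umat, sum_div, div_mul_eq_mul_div]

theorem That_apply (k : M → M → ℝ) (x : Fin n → M) (z : Fin m → M) (f : M → ℝ) (p : M) :
    That k x z f p = (∑ i, Khat k z p (x i) * f (x i)) / ∑ i, Khat k z p (x i) := by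
  rcases n.eq_zero_or_pos with rfl | hn
  · simp [That]
  simp only [That, dhat, div_mul_eq_mul_div, ← sum_div]
  field_simp

theorem nystromExtension_Khat_apply_sample (x : Fin n → M) (z : Fin m → M) {lam : ℝ}
    (hlam : lam ≠ 0) {v : Fin n → ℝ} (heig : (Umat k x z).mulVec v = lam • v) (i : Fin n) :
    nystromExtension (Khat k z) x lam v (x i) = v i :=
  nystromExtension_apply_sample hlam
    (fun i => (Umat_mulVec_apply k x z v i).symm.trans (congrFun heig i)) i

theorem That_nystromExtension (x : Fin n → M) (z : Fin m → M) {lam : ℝ} (hlam : lam ≠ 0)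
    {v : Fin n → ℝ} (heig : (Umat k x z).mulVec v = lam • v) (p : M) :
    That k x z (nystromExtension (Khat k z) x lam v) p =
      lam * nystromExtension (Khat k z) x lam v p := by
  simp only [That_apply, nystromExtension_Khat_apply_sample x z hlam heig,
    nystromExtension_eq_div, mul_div_cancel₀ _ hlam]

end LandmarkKernel

/-- If `v` is an eigenvector of `U_n` with eigenvalue `λ ≠ 0`, then the function
`f(x) := (Σ_j K̂(x,x_j) v_j)/(λ Σ_j K̂(x,x_j))` is continuous, restricts to `v` on
the sample points, and is an eigenfunction of `T̂` with the same eigenvalue. -/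
theorem eigenvector_extension_is_eigenfunction
    {M : Type*} [TopologicalSpace M] {n m : ℕ} (hn : 0 < n) (hm : 0 < m)
    (x : Fin n → M) (z : Fin m → M) (k : M → M → ℝ)
    (hk : Continuous fun p : M × M => k p.1 p.2)
    (hkpos : ∀ a b, 0 < k a b)
    (lam : ℝ) (hlam : lam ≠ 0) (v : Fin n → ℝ)
    (heig : (Umat k x z).mulVec v = lam • v) :
    Continuous (fun p : M =>
        (∑ j, Khat k z p (x j) * v j) / (lam * ∑ j, Khat k z p (x j))) ∧
    (∀ i, (∑ j, Khat k z (x i) (x j) * v j) /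
        (lam * ∑ j, Khat k z (x i) (x j)) = v i) ∧
    (∀ p : M, That k x z
        (fun q => (∑ j, Khat k z q (x j) * v j) / (lam * ∑ j, Khat k z q (x j))) p =
      lam * ((∑ j, Khat k z p (x j) * v j) / (lam * ∑ j, Khat k z p (x j)))) := by
  have hk_left w : Continuous fun p => k p w := hk.comp (.prodMk_left w)
  refine ⟨?_, ?_, That_nystromExtension x z hlam heig⟩
  · exact continuous_nystromExtension (continuous_Khat_left hk_left z) x
      (fun p => (sum_Khat_pos hn hm hkpos x z p).ne') lam v
  · exact nystromExtension_Khat_apply_sample x z hlam heig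
end

section
/- Suppose a_α ≤ Y_α ≤ b_α almost surely for every α ∈ 𝒜, where a_α, b_α ∈ ℝ, and suppose (𝒜_j)_{j=1}^{k} is a proper cover of 𝒜 of size k. Then for all t > 0, ℙ( X − 𝔼[X] ≥ t ) ≤ exp( −2t² / ( k · Σ_{α∈𝒜} (b_α − a_α)² ) ), and the same bound holds for ℙ( X − 𝔼[X] ≤ −t ). -/
/-!
Choose for every index one piece of the cover containing it. This splits `X - 𝔼X` into `k`
fibre sums, each a sum of independent centred bounded variables, hence sub-Gaussian with
parameter `∑ (b_α - a_α)² / 4` by Hoeffding's lemma. The fibre sums are dependent, but Hölder's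
inequality still makes square roots of sub-Gaussian parameters subadditive, and Cauchy–Schwarz
bounds `(∑ⱼ √cⱼ)²` by `k ∑ⱼ cⱼ`. The Chernoff bound for sub-Gaussian variables gives both tails.
-/

open MeasureTheory ProbabilityTheory
open scoped BigOperators NNReal

namespace ProbabilityTheory.HasSubgaussianMGF

variable {Ω ι : Type*} {mΩ : MeasurableSpace Ω} {μ : Measure Ω}

lemma mono {X : Ω → ℝ} {c c' : ℝ≥0} (h : HasSubgaussianMGF X c μ) (hc : c ≤ c') :
    HasSubgaussianMGF X c' μ where
  integrable_exp_mul := h.integrable_exp_mul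
  mgf_le t := (h.mgf_le t).trans (by gcongr)

lemma sum [IsZeroOrProbabilityMeasure μ] {X : ι → Ω → ℝ} {c : ι → ℝ≥0} {s : Finset ι}
    (h : ∀ i ∈ s, HasSubgaussianMGF (X i) (c i) μ) :
    HasSubgaussianMGF (fun ω ↦ ∑ i ∈ s, X i ω) ((∑ i ∈ s, (c i).sqrt) ^ 2) μ := by
  classical
  induction s using Finset.induction_on with
  | empty => simp [fun_zero]
  | insert i s his ih =>
    have hs := ih fun j hj ↦ h j (Finset.mem_insert_of_mem hj)
    have hi := (h i (Finset.mem_insert_self i s)).add hs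
    simpa only [Finset.sum_insert his, NNReal.sqrt_sq] using hi

lemma sum_card_mul [IsZeroOrProbabilityMeasure μ] {X : ι → Ω → ℝ} {c : ι → ℝ≥0}
    {s : Finset ι} (h : ∀ i ∈ s, HasSubgaussianMGF (X i) (c i) μ) :
    HasSubgaussianMGF (fun ω ↦ ∑ i ∈ s, X i ω) (s.card * ∑ i ∈ s, c i) μ := by
  refine (sum h).mono ?_
  simpa only [NNReal.sq_sqrt] using sq_sum_le_card_mul_sum_sq (s := s) (f := fun i ↦ (c i).sqrt)

lemma sum_of_iIndepFun_of_subset {X : ι → Ω → ℝ} {c : ι → ℝ≥0} {s t : Finset ι}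
    (h_indep : iIndepFun (fun i : s ↦ X i) μ) (hts : t ⊆ s)
    (h_subG : ∀ i ∈ t, HasSubgaussianMGF (X i) (c i) μ) :
    HasSubgaussianMGF (fun ω ↦ ∑ i ∈ t, X i ω) (∑ i ∈ t, c i) μ := by
  classical
  have h := sum_of_iIndepFun h_indep (c := fun i ↦ c i) (s := t.subtype (· ∈ s))
    fun i hi ↦ h_subG i (Finset.mem_subtype.1 hi)
  convert h using 2 <;> exact (Finset.sum_subtype_of_mem _ fun i hi ↦ hts hi).symm

lemma sum_of_proper_cover [IsZeroOrProbabilityMeasure μ] {J : Type*} [Fintype ι] [Fintype J]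
    {X : ι → Ω → ℝ} {c : ι → ℝ≥0} (cov : J → Finset ι) (hcover : ∀ i, ∃ j, i ∈ cov j)
    (h_indep : ∀ j, iIndepFun (fun i : cov j ↦ X i) μ)
    (h_subG : ∀ i, HasSubgaussianMGF (X i) (c i) μ) :
    HasSubgaussianMGF (fun ω ↦ ∑ i, X i ω) (Fintype.card J * ∑ i, c i) μ := by
  classical
  choose piece hpiece using hcover
  have h_fibre (j : J) : HasSubgaussianMGF (fun ω ↦ ∑ i with piece i = j, X i ω)
      (∑ i with piece i = j, c i) μ :=
    sum_of_iIndepFun_of_subset (h_indep j) (fun i hi ↦ (Finset.mem_filter.1 hi).2 ▸ hpiece i)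
      fun i _ ↦ h_subG i
  have h := sum_card_mul (s := Finset.univ) fun j _ ↦ h_fibre j
  rw [Finset.card_univ] at h
  convert h using 2 <;> exact (Finset.sum_fiberwise _ piece _).symm

end ProbabilityTheory.HasSubgaussianMGF

/-- Hoeffding-type concentration inequality for a sum `X = Σ_α Y_α` of bounded,
possibly dependent random variables admitting a proper cover of size `k` (Janson):
`ℙ(X − 𝔼X ≥ t) ≤ exp(−2t² / (k Σ_α (b_α − a_α)²))`, and likewise for the lower tail. -/
theorem hoeffding_dependent_proper_cover
    {Ω : Type*} [MeasurableSpace Ω] (μ : Measure Ω) [IsProbabilityMeasure μ]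
    {ι : Type*} [Fintype ι]
    (Y : ι → Ω → ℝ) (hmeas : ∀ α, Measurable (Y α))
    (hint : ∀ α, Integrable (Y α) μ)
    (a b : ι → ℝ)
    (hbound : ∀ α, ∀ᵐ ω ∂μ, a α ≤ Y α ω ∧ Y α ω ≤ b α)
    (k : ℕ) (cov : Fin k → Finset ι)
    (hcover : ∀ α, ∃ j, α ∈ cov j)
    (hind : ∀ j, iIndepFun
        (fun α : (cov j : Finset ι) => Y α) μ)
    (t : ℝ) (ht : 0 < t) :
    (μ {ω | t ≤ (∑ α, Y α ω) - ∫ ω', (∑ α, Y α ω') ∂μ}).toReal ≤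
        Real.exp (-2 * t ^ 2 / (k * ∑ α, (b α - a α) ^ 2)) ∧
    (μ {ω | (∑ α, Y α ω) - ∫ ω', (∑ α, Y α ω') ∂μ ≤ -t}).toReal ≤
        Real.exp (-2 * t ^ 2 / (k * ∑ α, (b α - a α) ^ 2)) := by
  have h_centred := HasSubgaussianMGF.sum_of_proper_cover cov hcover
    (fun j ↦ (hind j).comp (fun α x ↦ x - μ[Y α]) fun _ ↦ measurable_sub_const _)
    fun α ↦ hasSubgaussianMGF_of_mem_Icc (hmeas α).aemeasurable (hbound α)
  have h_sum (ω : Ω) : (∑ α, Y α ω) - ∫ ω', (∑ α, Y α ω') ∂μ = ∑ α, (Y α ω - μ[Y α]) := by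
    rw [integral_finsetSum _ fun α _ ↦ hint α, Finset.sum_sub_distrib]
  have h_param : -t ^ 2 / (2 * ((Fintype.card (Fin k) : ℝ≥0) *
      ∑ α, (‖b α - a α‖₊ / 2) ^ 2 : ℝ≥0)) = -2 * t ^ 2 / (k * ∑ α, (b α - a α) ^ 2) := by
    push_cast
    simp only [Real.norm_eq_abs, sq_abs, div_pow, ← Finset.sum_div, Fintype.card_fin]
    ring
  simp only [h_sum, ← h_param, ← measureReal_def]
  refine ⟨h_centred.measure_ge_le ht.le, ?_⟩
  simpa only [Pi.neg_apply, Finset.sum_neg_distrib, le_neg] using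
    h_centred.neg.measure_ge_le ht.le
end

section
/- Suppose there is b > 0 with Y_α − 𝔼[Y_α] ≤ b almost surely for every α ∈ 𝒜, set S := Σ_{α∈𝒜} Var(Y_α), and suppose (𝒜_j)_{j=1}^{k} is a proper cover of 𝒜 of size k. Then for all t > 0, ℙ( X − 𝔼[X] ≥ t ) ≤ exp( −8t² / ( 25 k (S + bt/3) ) ). If in addition Y_α − 𝔼[Y_α] ≥ −b almost surely for all α, the same bound holds for ℙ( X − 𝔼[X] ≤ −t ). -/
/-!
Janson's argument. Choose for every `α` one set `𝒜_j` of the cover containing it; this splits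
`X - 𝔼X` into `k` blocks, each a sum of independent centred variables. By Hölder's inequality
with `k` equal exponents, `𝔼 exp (u/k · (X - 𝔼X)) ≤ ∏_j (𝔼 exp (u · block_j))^(1/k)`, and
independence factorises each block's moment generating function. A centred variable `Z ≤ b`
satisfies `𝔼 exp (u Z) ≤ exp (u² Var Z / (2 (1 - ub/3)))` for `0 ≤ ub < 3`, since
`exp x ≤ 1 + x + x² / (2 (1 - c/3))` for `x ≤ c < 3` (compare the tail of the exponential
series with a geometric series). The Chernoff bound with a suitable `u` finishes the upper
tail; the lower tail is the upper tail of `-Y`.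
-/

open MeasureTheory ProbabilityTheory Real Finset
open scoped Nat ENNReal

lemma Nat.two_mul_three_pow_le_factorial (n : ℕ) : 2 * 3 ^ n ≤ (n + 2)! := by
  induction n with
  | zero => simp [Nat.factorial]
  | succ n ih =>
    rw [Nat.factorial_succ, pow_succ]
    nlinarith

namespace Real

lemma exp_le_one_add_add_sq_div_of_nonneg {x : ℝ} (hx : 0 ≤ x) (hx3 : x < 3) :
    exp x ≤ 1 + x + x ^ 2 / (2 * (1 - x / 3)) := by
  have hexp : HasSum (fun n : ℕ => x ^ (n + 2) / (n + 2)!) (exp x - (1 + x)) := by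
    have := (hasSum_nat_add_iff' 2).2 (exp_eq_exp_ℝ ▸ NormedSpace.expSeries_div_hasSum_exp x)
    simpa [Finset.sum_range_succ, add_comm] using this
  have hgeom : HasSum (fun n : ℕ => x ^ 2 / 2 * (x / 3) ^ n) (x ^ 2 / 2 * (1 - x / 3)⁻¹) :=
    (hasSum_geometric_of_lt_one (by positivity) (by linarith)).mul_left _
  have hterm (n : ℕ) : x ^ (n + 2) / (n + 2)! ≤ x ^ 2 / 2 * (x / 3) ^ n := by
    have hfact : (2 * 3 ^ n : ℝ) ≤ (n + 2)! := mod_cast Nat.two_mul_three_pow_le_factorial n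
    rw [div_pow, div_le_iff₀ (by positivity)]
    calc x ^ (n + 2) = x ^ 2 / 2 * (x ^ n / 3 ^ n) * (2 * 3 ^ n) := by field_simp; ring
      _ ≤ x ^ 2 / 2 * (x ^ n / 3 ^ n) * (n + 2)! := by gcongr
  have := hasSum_le hterm hexp hgeom
  rw [div_mul_eq_div_div, div_eq_mul_inv (x ^ 2 / 2)]
  linarith

lemma exp_le_one_add_add_sq_div_two_of_nonpos {x : ℝ} (hx : x ≤ 0) :
    exp x ≤ 1 + x + x ^ 2 / 2 := by
  have hderiv (y : ℝ) : HasDerivAt (fun y => 1 + y + y ^ 2 / 2 - exp y) (1 + y - exp y) y := by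
    refine ((((hasDerivAt_id' y).const_add 1).fun_add
      ((hasDerivAt_pow 2 y).div_const 2)).fun_sub (hasDerivAt_exp y)).congr_deriv ?_
    norm_num
  have hanti : Antitone fun y : ℝ => 1 + y + y ^ 2 / 2 - exp y :=
    antitone_of_deriv_nonpos (fun y => (hderiv y).differentiableAt)
      fun y => (hderiv y).deriv ▸ by linarith [add_one_le_exp y]
  simpa using hanti hx

lemma exp_le_one_add_add_sq_div_of_le {x c : ℝ} (hxc : x ≤ c) (hc : 0 ≤ c) (hc3 : c < 3) :
    exp x ≤ 1 + x + x ^ 2 / (2 * (1 - c / 3)) := by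
  rcases le_total x 0 with hx | hx
  · calc exp x ≤ 1 + x + x ^ 2 / 2 := exp_le_one_add_add_sq_div_two_of_nonpos hx
      _ ≤ 1 + x + x ^ 2 / (2 * (1 - c / 3)) := by gcongr <;> linarith
  · calc exp x ≤ 1 + x + x ^ 2 / (2 * (1 - x / 3)) :=
          exp_le_one_add_add_sq_div_of_nonneg hx (hxc.trans_lt hc3)
      _ ≤ 1 + x + x ^ 2 / (2 * (1 - c / 3)) := by
        gcongr
        linarith

end Real

lemma bernstein_exponent_le {S b t u : ℝ} (hS : 0 ≤ S) (hb : 0 < b) (ht : 0 < t)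
    (hu : u = t / (S + 5 * b * t / 12)) :
    -u * t + u ^ 2 * S / (2 * (1 - u * b / 3)) ≤ -8 * t ^ 2 / (25 * (S + b * t / 3)) := by
  have hbt : 0 < b * t := mul_pos hb ht
  have hslack : 1 - u * b / 3 = (S + b * t / 12) / (S + 5 * b * t / 12) := by
    rw [hu]; field_simp; ring
  have hD' : 0 < S + b * t / 12 := by positivity
  calc -u * t + u ^ 2 * S / (2 * (1 - u * b / 3))
      = -t ^ 2 / (S + 5 * b * t / 12)
          + t ^ 2 / (2 * (S + 5 * b * t / 12)) * (S / (S + b * t / 12)) := by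
        rw [hslack, hu]; field_simp
    _ ≤ -t ^ 2 / (S + 5 * b * t / 12) + t ^ 2 / (2 * (S + 5 * b * t / 12)) * 1 := by
        gcongr
        exact div_le_one_of_le₀ (by linarith) hD'.le
    _ = -t ^ 2 / (2 * (S + 5 * b * t / 12)) := by field_simp; ring
    _ ≤ -8 * t ^ 2 / (25 * (S + b * t / 3)) := by
        rw [neg_div, neg_mul, neg_div, neg_le_neg_iff,
          div_le_div_iff₀ (by positivity) (by positivity)]
        nlinarith [sq_nonneg t]

namespace ProbabilityTheory

variable {Ω : Type*} [MeasurableSpace Ω] {μ : Measure Ω}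

lemma mgf_le_of_le_of_integral_eq_zero [IsProbabilityMeasure μ] {Z : Ω → ℝ} (hZ : MemLp Z 2 μ)
    (hmean : μ[Z] = 0) {b u : ℝ} (hb : 0 ≤ b) (hZb : ∀ᵐ ω ∂μ, Z ω ≤ b) (hu : 0 ≤ u)
    (hub : u * b < 3) :
    mgf Z μ u ≤ exp (u ^ 2 * Var[Z; μ] / (2 * (1 - u * b / 3))) := by
  set c := u ^ 2 / (2 * (1 - u * b / 3))
  have hquad : ∀ᵐ ω ∂μ, exp (u * Z ω) ≤ 1 + u * Z ω + c * Z ω ^ 2 := by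
    filter_upwards [hZb] with ω hω
    have := exp_le_one_add_add_sq_div_of_le (mul_le_mul_of_nonneg_left hω hu)
      (by positivity) hub
    rwa [mul_pow, mul_div_right_comm] at this
  have hZint : Integrable Z μ := hZ.integrable one_le_two
  have hZsq : Integrable (fun ω => c * Z ω ^ 2) μ := hZ.integrable_sq.const_mul c
  have hlin : Integrable (fun ω => 1 + u * Z ω) μ := by fun_prop
  calc mgf Z μ u ≤ ∫ ω, 1 + u * Z ω + c * Z ω ^ 2 ∂μ :=
        integral_mono_ae (integrable_exp_mul_of_le u b hu hZ.aemeasurable hZb)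
          (hlin.add hZsq) hquad
    _ = 1 + c * Var[Z; μ] := by
        rw [integral_add hlin hZsq, integral_add (by fun_prop) (by fun_prop), integral_const_mul,
          integral_const_mul, hmean, variance_of_integral_eq_zero hZ.aemeasurable hmean]
        simp
    _ ≤ exp (c * Var[Z; μ]) := by linarith [add_one_le_exp (c * Var[Z; μ])]
    _ = exp (u ^ 2 * Var[Z; μ] / (2 * (1 - u * b / 3))) := by rw [mul_div_right_comm]

lemma integrable_exp_mul_sum_of_le [IsFiniteMeasure μ] {ι : Type*} (s : Finset ι)
    {Z : ι → Ω → ℝ} (hZ : ∀ α ∈ s, AEMeasurable (Z α) μ) {b u : ℝ}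
    (hZb : ∀ α ∈ s, ∀ᵐ ω ∂μ, Z α ω ≤ b) (hu : 0 ≤ u) :
    Integrable (fun ω => exp (u * ∑ α ∈ s, Z α ω)) μ := by
  refine integrable_exp_mul_of_le u (∑ _α ∈ s, b) hu (Finset.aemeasurable_fun_sum s hZ) ?_
  filter_upwards [(Filter.eventually_all_finset s).2 hZb] with ω hω
  exact sum_le_sum hω

lemma mgf_sum_le_prod_mgf_rpow {κ : Type*} (s : Finset κ) {X : κ → Ω → ℝ}
    (hX : ∀ i ∈ s, AEMeasurable (X i) μ) {p : κ → ℝ} (hp : ∀ i ∈ s, 0 < p i)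
    (hp1 : ∑ i ∈ s, p i = 1) {t : ℝ}
    (hint : ∀ i ∈ s, Integrable (fun ω => exp (t / p i * X i ω)) μ) :
    mgf (fun ω => ∑ i ∈ s, X i ω) μ t ≤ ∏ i ∈ s, mgf (X i) μ (t / p i) ^ p i := by
  set F : κ → Ω → ℝ≥0∞ := fun i ω => ENNReal.ofReal (exp (t / p i * X i ω))
  have hF : ∀ i ∈ s, ∫⁻ ω, F i ω ∂μ = ENNReal.ofReal (mgf (X i) μ (t / p i)) := fun i hi =>
    (ofReal_integral_eq_lintegral_ofReal (hint i hi) (ae_of_all _ fun ω => (exp_pos _).le)).symm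
  have hsplit (ω : Ω) :
      ENNReal.ofReal (exp (t * ∑ i ∈ s, X i ω)) = ∏ i ∈ s, F i ω ^ p i := by
    have hexp : exp (t * ∑ i ∈ s, X i ω) = ∏ i ∈ s, exp (t / p i * X i ω) ^ p i := by
      rw [mul_sum, exp_sum]
      refine prod_congr rfl fun i hi => ?_
      rw [← exp_mul, div_mul_eq_mul_div, div_mul_cancel₀ _ (hp i hi).ne', mul_comm]
    rw [hexp, ENNReal.ofReal_prod_of_nonneg fun i _ => by positivity]
    exact prod_congr rfl fun i hi =>
      (ENNReal.ofReal_rpow_of_nonneg (exp_pos _).le (hp i hi).le).symm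
  have hsum : AEMeasurable (fun ω => ∑ i ∈ s, X i ω) μ := Finset.aemeasurable_fun_sum s hX
  calc mgf (fun ω => ∑ i ∈ s, X i ω) μ t
      = (∫⁻ ω, ENNReal.ofReal (exp (t * ∑ i ∈ s, X i ω)) ∂μ).toReal :=
        integral_eq_lintegral_of_nonneg_ae (ae_of_all _ fun ω => (exp_pos _).le)
          (aemeasurable_exp_mul t hsum)
    _ = (∫⁻ ω, ∏ i ∈ s, F i ω ^ p i ∂μ).toReal := by simp_rw [hsplit]
    _ ≤ (∏ i ∈ s, (∫⁻ ω, F i ω ∂μ) ^ p i).toReal := by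
        refine ENNReal.toReal_mono ?_ (ENNReal.lintegral_prod_norm_pow_le s
          (fun i hi => ((hX i hi).const_mul _).exp.ennreal_ofReal) hp1 fun i hi => (hp i hi).le)
        refine (ENNReal.prod_lt_top fun i hi => ?_).ne
        rw [hF i hi]
        exact ENNReal.rpow_lt_top_of_nonneg (hp i hi).le ENNReal.ofReal_ne_top
    _ = ∏ i ∈ s, mgf (X i) μ (t / p i) ^ p i := by
        rw [ENNReal.toReal_prod]
        refine prod_congr rfl fun i hi => ?_
        rw [hF i hi, ← ENNReal.toReal_rpow, ENNReal.toReal_ofReal mgf_nonneg]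

lemma iIndepFun.mgf_sum_of_subset {ι : Type*} {Z : ι → Ω → ℝ} {C A : Finset ι}
    (hind : iIndepFun (fun α : C => Z α) μ) (hZ : ∀ α, AEMeasurable (Z α) μ) (hAC : A ⊆ C)
    (u : ℝ) : mgf (fun ω => ∑ α ∈ A, Z α ω) μ u = ∏ α ∈ A, mgf (Z α) μ u := by
  classical
  rw [← subtype_map_of_mem hAC, prod_map]
  simp_rw [sum_map, Function.Embedding.coe_subtype]
  rw [← hind.mgf_sum₀ (fun β => hZ β)]
  congr 1
  ext ω
  rw [Finset.sum_apply]

lemma mgf_sum_le_exp_of_iIndepFun [IsProbabilityMeasure μ] {ι : Type*} {Z : ι → Ω → ℝ}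
    {C A : Finset ι} (hind : iIndepFun (fun α : C => Z α) μ) (hAC : A ⊆ C)
    (hZ : ∀ α, MemLp (Z α) 2 μ) (hmean : ∀ α, μ[Z α] = 0) {b u : ℝ} (hb : 0 ≤ b)
    (hZb : ∀ α, ∀ᵐ ω ∂μ, Z α ω ≤ b) (hu : 0 ≤ u) (hub : u * b < 3) :
    mgf (fun ω => ∑ α ∈ A, Z α ω) μ u
      ≤ exp (u ^ 2 * (∑ α ∈ A, Var[Z α; μ]) / (2 * (1 - u * b / 3))) := by
  rw [hind.mgf_sum_of_subset (fun α => (hZ α).aemeasurable) hAC, mul_sum, sum_div, exp_sum]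
  exact prod_le_prod (fun α _ => mgf_nonneg)
    fun α _ => mgf_le_of_le_of_integral_eq_zero (hZ α) (hmean α) hb (hZb α) hu hub

lemma mgf_sum_le_exp_of_properCover [IsProbabilityMeasure μ] {ι : Type*} [Fintype ι]
    {Z : ι → Ω → ℝ} (hZ : ∀ α, MemLp (Z α) 2 μ) (hmean : ∀ α, μ[Z α] = 0) {b u : ℝ}
    (hb : 0 ≤ b) (hZb : ∀ α, ∀ᵐ ω ∂μ, Z α ω ≤ b) (hu : 0 ≤ u) (hub : u * b < 3)
    {k : ℕ} (hk : 0 < k) (cov : Fin k → Finset ι) (hcover : ∀ α, ∃ j, α ∈ cov j)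
    (hind : ∀ j, iIndepFun (fun α : cov j => Z α) μ) :
    mgf (fun ω => ∑ α, Z α ω) μ (u / k)
      ≤ exp (u ^ 2 * (∑ α, Var[Z α; μ]) / (2 * (1 - u * b / 3)) / k) := by
  classical
  choose g hg using hcover
  set A : Fin k → Finset ι := fun j => univ.filter (g · = j)
  have hAcov (j : Fin k) : A j ⊆ cov j := fun α hα => (mem_filter.1 hα).2 ▸ hg α
  have hfiber (f : ι → ℝ) : ∑ α, f α = ∑ j, ∑ α ∈ A j, f α := (sum_fiberwise univ g f).symm
  have hk' : (0 : ℝ) < k := Nat.cast_pos.2 hk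
  have hweights : ∑ _j : Fin k, (k : ℝ)⁻¹ = 1 := by simp [hk'.ne']
  have hrate : u / k / (k : ℝ)⁻¹ = u := by field_simp
  calc mgf (fun ω => ∑ α, Z α ω) μ (u / k)
      = mgf (fun ω => ∑ j, ∑ α ∈ A j, Z α ω) μ (u / k) := by simp_rw [← hfiber]
    _ ≤ ∏ j, mgf (fun ω => ∑ α ∈ A j, Z α ω) μ u ^ (k : ℝ)⁻¹ := by
        simpa only [hrate] using mgf_sum_le_prod_mgf_rpow (X := fun j ω => ∑ α ∈ A j, Z α ω)
          (t := u / k) univ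
          (fun j _ => Finset.aemeasurable_fun_sum _ fun α _ => (hZ α).aemeasurable)
          (fun j _ => inv_pos.2 hk') hweights fun j _ => by
            simpa only [hrate] using
              integrable_exp_mul_sum_of_le (A j) (fun α _ => (hZ α).aemeasurable)
                (fun α _ => hZb α) hu
    _ ≤ ∏ j, exp (u ^ 2 * (∑ α ∈ A j, Var[Z α; μ]) / (2 * (1 - u * b / 3))) ^ (k : ℝ)⁻¹ := by
        refine prod_le_prod (fun j _ => rpow_nonneg mgf_nonneg _) fun j _ => rpow_le_rpow mgf_nonneg
          (mgf_sum_le_exp_of_iIndepFun (hind j) (hAcov j) hZ hmean hb hZb hu hub) (by positivity)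
    _ = exp (u ^ 2 * (∑ α, Var[Z α; μ]) / (2 * (1 - u * b / 3)) / k) := by
        simp_rw [← exp_mul, ← exp_sum, ← sum_mul, ← sum_div, ← mul_sum, ← hfiber, div_eq_mul_inv]

theorem measure_sum_ge_le_of_properCover [IsProbabilityMeasure μ] {ι : Type*} [Fintype ι]
    {Z : ι → Ω → ℝ} (hZ : ∀ α, MemLp (Z α) 2 μ) (hmean : ∀ α, μ[Z α] = 0) {b t : ℝ}
    (hb : 0 < b) (hZb : ∀ α, ∀ᵐ ω ∂μ, Z α ω ≤ b) {k : ℕ} (cov : Fin k → Finset ι)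
    (hcover : ∀ α, ∃ j, α ∈ cov j) (hind : ∀ j, iIndepFun (fun α : cov j => Z α) μ)
    (ht : 0 < t) :
    μ.real {ω | t ≤ ∑ α, Z α ω}
      ≤ exp (-8 * t ^ 2 / (25 * k * ((∑ α, Var[Z α; μ]) + b * t / 3))) := by
  rcases k.eq_zero_or_pos with rfl | hk
  · simp [measureReal_le_one]
  set S := ∑ α, Var[Z α; μ]
  have hS : 0 ≤ S := sum_nonneg fun α _ => variance_nonneg _ _
  -- Any `u = t / (S + c * b * t / 3)` with `1 < c ≤ 25 / 16` works (here `c = 5 / 4`);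
  -- `c > 1` keeps `u * b < 3` even when `S = 0`.
  set u := t / (S + 5 * b * t / 12) with hu
  have hD : 0 < S + 5 * b * t / 12 := by positivity
  have hub : u * b < 3 := by
    rw [hu, div_mul_eq_mul_div, div_lt_iff₀ hD]
    nlinarith [mul_pos hb ht]
  calc μ.real {ω | t ≤ ∑ α, Z α ω}
      ≤ exp (-(u / k) * t) * mgf (fun ω => ∑ α, Z α ω) μ (u / k) :=
        measure_ge_le_exp_mul_mgf t (by positivity)
          (integrable_exp_mul_sum_of_le univ (fun α _ => (hZ α).aemeasurable) (fun α _ => hZb α)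
            (by positivity))
    _ ≤ exp (-(u / k) * t) * exp (u ^ 2 * S / (2 * (1 - u * b / 3)) / k) := by
        gcongr
        exact mgf_sum_le_exp_of_properCover hZ hmean hb.le hZb (by positivity) hub hk cov
          hcover hind
    _ = exp ((-u * t + u ^ 2 * S / (2 * (1 - u * b / 3))) / k) := by
        rw [← exp_add]
        ring_nf
    _ ≤ exp (-8 * t ^ 2 / (25 * (S + b * t / 3)) / k) := by
        gcongr
        exact bernstein_exponent_le hS hb ht hu
    _ = exp (-8 * t ^ 2 / (25 * k * (S + b * t / 3))) := by
        rw [div_div, mul_right_comm]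

theorem measure_sum_sub_integral_ge_le_of_properCover [IsProbabilityMeasure μ] {ι : Type*}
    [Fintype ι] {Y : ι → Ω → ℝ} (hY : ∀ α, MemLp (Y α) 2 μ) {b t : ℝ} (hb : 0 < b)
    (hYb : ∀ α, ∀ᵐ ω ∂μ, Y α ω - ∫ ω', Y α ω' ∂μ ≤ b) {k : ℕ} (cov : Fin k → Finset ι)
    (hcover : ∀ α, ∃ j, α ∈ cov j) (hind : ∀ j, iIndepFun (fun α : cov j => Y α) μ)
    (ht : 0 < t) :
    μ.real {ω | t ≤ (∑ α, Y α ω) - ∫ ω', (∑ α, Y α ω') ∂μ}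
      ≤ exp (-8 * t ^ 2 / (25 * k * ((∑ α, Var[Y α; μ]) + b * t / 3))) := by
  have hYint (α : ι) : Integrable (Y α) μ := (hY α).integrable one_le_two
  have hcentered : {ω | t ≤ (∑ α, Y α ω) - ∫ ω', (∑ α, Y α ω') ∂μ}
      = {ω | t ≤ ∑ α, (Y α ω - ∫ ω', Y α ω' ∂μ)} := by
    simp_rw [integral_finsetSum univ fun α _ => hYint α, sum_sub_distrib]
  have hvar (α : ι) : Var[fun ω => Y α ω - ∫ ω', Y α ω' ∂μ; μ] = Var[Y α; μ] :=
    variance_sub_const (hY α).aestronglyMeasurable _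
  rw [hcentered, ← sum_congr rfl fun α _ => hvar α]
  exact measure_sum_ge_le_of_properCover (fun α => (hY α).sub (memLp_const _))
    (fun α => by simp [integral_sub (hYint α) (integrable_const _)]) hb hYb cov hcover
    (fun j => (hind j).comp (fun α x => x - ∫ ω', Y α ω' ∂μ) fun _ => measurable_id.sub_const _)
    ht

end ProbabilityTheory

theorem bernstein_dependent_proper_cover_general
    {Ω : Type*} [MeasurableSpace Ω] (μ : Measure Ω) [IsProbabilityMeasure μ]
    {ι : Type*} [Fintype ι]
    (Y : ι → Ω → ℝ)
    (hL2 : ∀ α, MemLp (Y α) 2 μ)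
    (b : ℝ) (hb : 0 < b)
    (hupper : ∀ α, ∀ᵐ ω ∂μ, Y α ω - ∫ ω', Y α ω' ∂μ ≤ b)
    (k : ℕ) (cov : Fin k → Finset ι)
    (hcover : ∀ α, ∃ j, α ∈ cov j)
    (hind : ∀ j, iIndepFun
        (fun α : (cov j : Finset ι) => Y α) μ)
    (t : ℝ) (ht : 0 < t) :
    (μ {ω | t ≤ (∑ α, Y α ω) - ∫ ω', (∑ α, Y α ω') ∂μ}).toReal ≤
        Real.exp (-8 * t ^ 2 /
          (25 * k * ((∑ α, ProbabilityTheory.variance (Y α) μ) + b * t / 3))) ∧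
    ((∀ α, ∀ᵐ ω ∂μ, -b ≤ Y α ω - ∫ ω', Y α ω' ∂μ) →
      (μ {ω | (∑ α, Y α ω) - ∫ ω', (∑ α, Y α ω') ∂μ ≤ -t}).toReal ≤
        Real.exp (-8 * t ^ 2 /
          (25 * k * ((∑ α, ProbabilityTheory.variance (Y α) μ) + b * t / 3)))) := by
  refine ⟨measure_sum_sub_integral_ge_le_of_properCover hL2 hb hupper cov hcover hind ht,
    fun hlower => ?_⟩
  have hneg := measure_sum_sub_integral_ge_le_of_properCover (Y := fun α ω => -Y α ω)
    (fun α => (hL2 α).neg) hb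
    (fun α => by filter_upwards [hlower α] with ω hω; rw [integral_neg]; linarith) cov hcover
    (fun j => (hind j).comp (fun _ x => -x) fun _ => measurable_neg) ht
  simp only [variance_fun_neg, sum_neg_distrib, integral_neg] at hneg
  have hflip : {ω | (∑ α, Y α ω) - ∫ ω', (∑ α, Y α ω') ∂μ ≤ -t}
      = {ω | t ≤ -∑ α, Y α ω - -∫ ω', (∑ α, Y α ω') ∂μ} := by
    ext ω
    simp only [Set.mem_ofPred_eq]
    constructor <;> intro h <;> linarith
  rw [hflip]
  exact hneg

/-- Bernstein-type concentration inequality for a sum `X = Σ_α Y_α` of possibly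
dependent random variables, whose upper fluctuations are bounded by `b`, admitting a
proper cover of size `k` (Janson): with `S = Σ_α Var(Y_α)`,
`ℙ(X − 𝔼X ≥ t) ≤ exp(−8t²/(25 k (S + bt/3)))`; if moreover the fluctuations are
bounded below by `−b`, the same bound holds for the lower tail. -/
theorem bernstein_dependent_proper_cover
    {Ω : Type*} [MeasurableSpace Ω] (μ : Measure Ω) [IsProbabilityMeasure μ]
    {ι : Type*} [Fintype ι]
    (Y : ι → Ω → ℝ) (hmeas : ∀ α, Measurable (Y α))
    (hL2 : ∀ α, MemLp (Y α) 2 μ)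
    (b : ℝ) (hb : 0 < b)
    (hupper : ∀ α, ∀ᵐ ω ∂μ, Y α ω - ∫ ω', Y α ω' ∂μ ≤ b)
    (k : ℕ) (cov : Fin k → Finset ι)
    (hcover : ∀ α, ∃ j, α ∈ cov j)
    (hind : ∀ j, iIndepFun
        (fun α : (cov j : Finset ι) => Y α) μ)
    (t : ℝ) (ht : 0 < t) :
    (μ {ω | t ≤ (∑ α, Y α ω) - ∫ ω', (∑ α, Y α ω') ∂μ}).toReal ≤
        Real.exp (-8 * t ^ 2 /
          (25 * k * ((∑ α, ProbabilityTheory.variance (Y α) μ) + b * t / 3))) ∧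
    ((∀ α, ∀ᵐ ω ∂μ, -b ≤ Y α ω - ∫ ω', Y α ω' ∂μ) →
      (μ {ω | (∑ α, Y α ω) - ∫ ω', (∑ α, Y α ω') ∂μ ≤ -t}).toReal ≤
        Real.exp (-8 * t ^ 2 /
          (25 * k * ((∑ α, ProbabilityTheory.variance (Y α) μ) + b * t / 3)))) :=
  bernstein_dependent_proper_cover_general μ Y hL2 b hb hupper k cov hcover hind t ht
end

section
/- Let f : S × S → ℝ be measurable with a ≤ f(u,v) ≤ b for all u, v ∈ S, where a < b are real numbers. Then for every t > 0, ℙ( (1/(nm)) Σ_{i=1}^{n} Σ_{j=1}^{m} f(x_i, y_j) − 𝔼[f(x_1, y_1)] ≥ t ) ≤ exp( −2 n m t² / ( (n + m − 1)(b − a)² ) ). -/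
open MeasureTheory ProbabilityTheory
open scoped BigOperators

open Real
open scoped NNReal

/-!
Cover the grid `Fin n × Fin m` by the `n m` diagonals `{(u + l, v + l) : l < d}`, `d = min n m`
(indices taken cyclically). The `d` cells of one diagonal involve distinct `x`'s and distinct
`y`'s, so their centred values are independent, and by Hoeffding's lemma the diagonal sum is
sub-Gaussian with variance proxy `d (b - a)² / 4`. Every cell lies on exactly `d` diagonals, so
the centred grid mean is the average of the `n m` diagonal means; by convexity of `exp`, an
average of sub-Gaussian variables, dependent or not, is sub-Gaussian with the same proxy
`(b - a)² / (4 d)`. The Chernoff bound and `n m ≤ d (n + m - 1)` finish the proof.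
-/

lemma Finset.sum_sum_sum_add_eq_card_smul {ι G H M : Type*} [AddGroup G] [Fintype G] [AddGroup H]
    [Fintype H] [AddCommMonoid M] (s : Finset ι) (α : ι → G) (β : ι → H) (g : G → H → M) :
    ∑ u, ∑ v, ∑ l ∈ s, g (u + α l) (v + β l) = s.card • ∑ u, ∑ v, g u v := by
  have hshift (l : ι) : ∑ u, ∑ v, g (u + α l) (v + β l) = ∑ u, ∑ v, g u v := by
    refine (Finset.sum_congr rfl fun u _ ↦ ?_).trans
      (Equiv.sum_comp (Equiv.addRight (α l)) fun u ↦ ∑ v, g u v)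
    exact Equiv.sum_comp (Equiv.addRight (β l)) (g (u + α l))
  calc ∑ u, ∑ v, ∑ l ∈ s, g (u + α l) (v + β l)
      = ∑ l ∈ s, ∑ u, ∑ v, g (u + α l) (v + β l) := by
        rw [Finset.sum_congr rfl fun u _ ↦ Finset.sum_comm, Finset.sum_comm]
    _ = s.card • ∑ u, ∑ v, g u v := by
        rw [Finset.sum_congr rfl fun l _ ↦ hshift l, Finset.sum_const]


lemma Nat.cast_mul_le_min_mul_add_sub_one {n m : ℕ} (hn : 0 < n) (hm : 0 < m) :
    (n : ℝ) * m ≤ (min n m : ℕ) * ((n : ℝ) + m - 1) := by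
  have hn' : (1 : ℝ) ≤ n := by exact_mod_cast hn
  have hm' : (1 : ℝ) ≤ m := by exact_mod_cast hm
  rcases le_total n m with h | h
  · rw [min_eq_left h]; nlinarith
  · rw [min_eq_right h]; nlinarith

lemma neg_sq_div_le_grid_exponent {n m : ℕ} (hn : 0 < n) (hm : 0 < m) (a b t : ℝ) :
    -t ^ 2 / (2 * (((‖b - a‖₊ / 2) ^ 2 / (min n m : ℕ) : ℝ≥0) : ℝ)) ≤
      -2 * n * m * t ^ 2 / (((n : ℝ) + m - 1) * (b - a) ^ 2) := by
  have hk : (0 : ℝ) < n + m - 1 := by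
    have : (1 : ℝ) ≤ n := by exact_mod_cast hn
    have : (1 : ℝ) ≤ m := by exact_mod_cast hm
    linarith
  have hratio : (n : ℝ) * m / (n + m - 1) ≤ (min n m : ℕ) :=
    (div_le_iff₀ hk).2 (Nat.cast_mul_le_min_mul_add_sub_one hn hm)
  have hproxy : (((‖b - a‖₊ / 2) ^ 2 / (min n m : ℕ) : ℝ≥0) : ℝ) =
      (b - a) ^ 2 / 4 / (min n m : ℕ) := by
    push_cast
    rw [Real.norm_eq_abs, div_pow, sq_abs]
    ring
  have hq : 0 ≤ (b - a) ^ 2 := sq_nonneg _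
  rw [hproxy]
  generalize (b - a) ^ 2 = q at *
  generalize (n : ℝ) + m - 1 = k at *
  generalize ((min n m : ℕ) : ℝ) = d at *
  calc -t ^ 2 / (2 * (q / 4 / d))
      = -(2 * t ^ 2 / q) * d := by rw [mul_div_assoc', div_div_eq_mul_div]; ring
    _ ≤ -(2 * t ^ 2 / q) * ((n : ℝ) * m / k) :=
      mul_le_mul_of_nonpos_left hratio (neg_nonpos.2 (by positivity))
    _ = _ := by ring

namespace ProbabilityTheory

variable {Ω : Type*} {mΩ : MeasurableSpace Ω} {μ : Measure Ω}

lemma iIndepFun.prodMk_of_sumElim {ι ι' κ β : Type*} [Fintype κ] [MeasurableSpace β]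
    {X : ι → Ω → β} {Y : ι' → Ω → β} (hX : ∀ i, Measurable (X i)) (hY : ∀ i, Measurable (Y i))
    (h : iIndepFun (Sum.elim X Y) μ) {σ : κ → ι} {τ : κ → ι'}
    (hσ : σ.Injective) (hτ : τ.Injective) :
    iIndepFun (fun k ω ↦ (X (σ k) ω, Y (τ k) ω)) μ := by
  have := h.isProbabilityMeasure
  have h' : iIndepFun (Sum.elim (X ∘ σ) (Y ∘ τ)) μ := by
    rw [← Sum.elim_comp_map]; exact h.precomp (g := Sum.map σ τ) (Sum.map_injective.2 ⟨hσ, hτ⟩)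
  have hXY : ∀ k, Measurable (Sum.elim (X ∘ σ) (Y ∘ τ) k) :=
    Sum.forall.2 ⟨fun _ ↦ hX _, fun _ ↦ hY _⟩
  have hpair (k : κ) : μ.map (fun ω ↦ (X (σ k) ω, Y (τ k) ω)) =
      (μ.map (X (σ k))).prod (μ.map (Y (τ k))) :=
    (h'.indepFun Sum.inl_ne_inr).map_prod_eq_prod_map_map (hX _).aemeasurable (hY _).aemeasurable
  -- The joint law of the pairs is the product law of all `2 |κ|` coordinates, regrouped by `e`.
  let e := (MeasurableEquiv.sumPiEquivProdPi fun _ : κ ⊕ κ ↦ β).trans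
    (MeasurableEquiv.arrowProdEquivProdArrow β β κ).symm
  have he : (fun ω k ↦ (X (σ k) ω, Y (τ k) ω)) = e ∘ fun ω i ↦ Sum.elim (X ∘ σ) (Y ∘ τ) i ω := rfl
  rw [iIndepFun_iff_map_fun_eq_pi_map fun k ↦ ((hX _).prodMk (hY _)).aemeasurable, he,
    ← Measure.map_map e.measurable (measurable_pi_lambda _ hXY),
    (iIndepFun_iff_map_fun_eq_pi_map fun i ↦ (hXY i).aemeasurable).1 h', funext hpair]
  exact ((measurePreserving_sumPiEquivProdPi _).trans
    (measurePreserving_arrowProdEquivProdArrow β β κ _ _).symm).map_eq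

lemma HasSubgaussianMGF.sum_mul_of_sum_eq_one {ι : Type*} {s : Finset ι} {w : ι → ℝ}
    {X : ι → Ω → ℝ} {c : ℝ≥0} (hw₀ : ∀ i ∈ s, 0 ≤ w i) (hw₁ : ∑ i ∈ s, w i = 1)
    (hX : ∀ i ∈ s, HasSubgaussianMGF (X i) c μ) :
    HasSubgaussianMGF (fun ω ↦ ∑ i ∈ s, w i * X i ω) c μ := by
  have hjensen (t : ℝ) (ω : Ω) :
      exp (t * ∑ i ∈ s, w i * X i ω) ≤ ∑ i ∈ s, w i * exp (t * X i ω) := by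
    simpa [Finset.mul_sum, mul_left_comm t] using
      convexOn_exp.map_sum_le hw₀ hw₁ fun i _ ↦ Set.mem_univ (t * X i ω)
  have hint (t : ℝ) : Integrable (fun ω ↦ ∑ i ∈ s, w i * exp (t * X i ω)) μ :=
    integrable_finsetSum _ fun i hi ↦ ((hX i hi).integrable_exp_mul t).const_mul _
  have hmeas : AEMeasurable (fun ω ↦ ∑ i ∈ s, w i * X i ω) μ :=
    Finset.aemeasurable_fun_sum _ fun i hi ↦ (hX i hi).aemeasurable.const_mul _
  have hint_exp (t : ℝ) : Integrable (fun ω ↦ exp (t * ∑ i ∈ s, w i * X i ω)) μ :=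
    (hint t).mono' (hmeas.const_mul t).exp.aestronglyMeasurable <| ae_of_all _ fun ω ↦ by
      simpa only [norm_of_nonneg (exp_pos _).le] using hjensen t ω
  refine ⟨hint_exp, fun t ↦ ?_⟩
  calc mgf (fun ω ↦ ∑ i ∈ s, w i * X i ω) μ t
      ≤ ∫ ω, ∑ i ∈ s, w i * exp (t * X i ω) ∂μ := integral_mono (hint_exp t) (hint t) (hjensen t)
    _ = ∑ i ∈ s, w i * mgf (X i) μ t := by
        rw [integral_finsetSum _ fun i hi ↦ ((hX i hi).integrable_exp_mul t).const_mul _]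
        simp_rw [integral_const_mul, mgf]
    _ ≤ ∑ i ∈ s, w i * exp (c * t ^ 2 / 2) := by
        gcongr with i hi
        · exact hw₀ i hi
        · exact (hX i hi).mgf_le t
    _ = exp (c * t ^ 2 / 2) := by rw [← Finset.sum_mul, hw₁, one_mul]

lemma hasSubgaussianMGF_grid_average {G H κ : Type*} [AddGroup G] [Fintype G] [Nonempty G]
    [AddGroup H] [Fintype H] [Nonempty H] [Fintype κ] [Nonempty κ] {Z : G → H → Ω → ℝ} {c : ℝ≥0}
    (α : κ → G) (β : κ → H) (hZ : ∀ u v, HasSubgaussianMGF (Z u v) c μ)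
    (hdiag : ∀ u v, iIndepFun (fun l ↦ Z (u + α l) (v + β l)) μ) :
    HasSubgaussianMGF (fun ω ↦ ((Fintype.card G : ℝ) * Fintype.card H)⁻¹ * ∑ u, ∑ v, Z u v ω)
      (c / Fintype.card κ) μ := by
  set N : ℝ := (Fintype.card G : ℝ) * Fintype.card H
  have hN : N ≠ 0 := by positivity
  have hdiagSum (p : G × H) :
      HasSubgaussianMGF (fun ω ↦ ∑ l, Z (p.1 + α l) (p.2 + β l) ω) (Fintype.card κ * c) μ := by
    simpa using HasSubgaussianMGF.sum_of_iIndepFun (hdiag p.1 p.2) (s := .univ) fun l _ ↦ hZ _ _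
  have hweights : ∑ _p : G × H, N⁻¹ = 1 := by
    rw [Finset.sum_const, Finset.card_univ, Fintype.card_prod, nsmul_eq_mul]
    push_cast
    exact mul_inv_cancel₀ hN
  have havg := (HasSubgaussianMGF.sum_mul_of_sum_eq_one (fun _ _ ↦ by positivity) hweights
    fun p _ ↦ hdiagSum p).const_mul (Fintype.card κ : ℝ)⁻¹
  have hparam : (⟨(Fintype.card κ : ℝ)⁻¹ ^ 2, sq_nonneg _⟩ * (Fintype.card κ * c) : ℝ≥0) =
      c / Fintype.card κ := by
    ext
    change (Fintype.card κ : ℝ)⁻¹ ^ 2 * (Fintype.card κ * c) = c / Fintype.card κ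
    field_simp
  rw [hparam] at havg
  convert havg using 1
  ext ω
  have hsum := Finset.univ.sum_sum_sum_add_eq_card_smul α β fun u v ↦ Z u v ω
  rw [nsmul_eq_mul, Finset.card_univ] at hsum
  rw [← Finset.mul_sum, Fintype.sum_prod_type, hsum]
  field_simp

end ProbabilityTheory

theorem grid_sampling_hoeffding_general
    {Ω : Type*} [MeasurableSpace Ω] (μ : Measure Ω) [IsProbabilityMeasure μ]
    {S : Type*} [MeasurableSpace S]
    {n m : ℕ} (hn : 0 < n) (hm : 0 < m)
    (x : Fin n → Ω → S) (y : Fin m → Ω → S)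
    (hxm : ∀ i, Measurable (x i)) (hym : ∀ j, Measurable (y j))
    (hindep : iIndepFun (β := fun _ : Fin n ⊕ Fin m => S)
        (Sum.elim x y) μ)
    (hxid : ∀ i, IdentDistrib (x i) (x ⟨0, hn⟩) μ μ)
    (hyid : ∀ j, IdentDistrib (y j) (y ⟨0, hm⟩) μ μ)
    (f : S → S → ℝ) (hf : Measurable fun p : S × S => f p.1 p.2)
    (a b : ℝ)
    (hfb : ∀ u v, a ≤ f u v ∧ f u v ≤ b)
    (t : ℝ) (ht : 0 < t) :
    (μ {ω | t ≤ (1 / ((n : ℝ) * m)) * (∑ i, ∑ j, f (x i ω) (y j ω))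
        - ∫ ω', f (x ⟨0, hn⟩ ω') (y ⟨0, hm⟩ ω') ∂μ}).toReal ≤
      Real.exp (-2 * n * m * t ^ 2 / (((n : ℝ) + m - 1) * (b - a) ^ 2)) := by
  have : NeZero n := ⟨hn.ne'⟩
  have : NeZero m := ⟨hm.ne'⟩
  have : NeZero (min n m) := ⟨(lt_min hn hm).ne'⟩
  set E := ∫ ω', f (x ⟨0, hn⟩ ω') (y ⟨0, hm⟩ ω') ∂μ
  have hxy (i : Fin n) (j : Fin m) : IndepFun (x i) (y j) μ := hindep.indepFun Sum.inl_ne_inr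
  have hmean (i : Fin n) (j : Fin m) : ∫ ω, f (x i ω) (y j ω) ∂μ = E :=
    (((hxid i).prodMk (hyid j) (hxy i j) (hxy _ _)).comp hf).integral_eq
  have hcell (i : Fin n) (j : Fin m) :
      HasSubgaussianMGF (fun ω ↦ f (x i ω) (y j ω) - E) ((‖b - a‖₊ / 2) ^ 2) μ := by
    rw [← hmean i j]
    exact hasSubgaussianMGF_of_mem_Icc (hf.comp ((hxm i).prodMk (hym j))).aemeasurable
      (ae_of_all _ fun ω ↦ hfb _ _)
  have hdiag (u : Fin n) (v : Fin m) : iIndepFun (fun l : Fin (min n m) ↦ fun ω ↦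
      f (x (u + Fin.castLE (min_le_left n m) l) ω) (y (v + Fin.castLE (min_le_right n m) l) ω)
        - E) μ :=
    (hindep.prodMk_of_sumElim hxm hym ((add_right_injective u).comp (Fin.castLE_injective _))
      ((add_right_injective v).comp (Fin.castLE_injective _))).comp
      (fun _ p ↦ f p.1 p.2 - E) fun _ ↦ hf.sub_const E
  have hgrid := hasSubgaussianMGF_grid_average _ _ hcell hdiag
  simp only [Fintype.card_fin] at hgrid
  have hset : {ω | t ≤ (1 / ((n : ℝ) * m)) * (∑ i, ∑ j, f (x i ω) (y j ω)) - E} =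
      {ω | t ≤ ((n : ℝ) * m)⁻¹ * ∑ i, ∑ j, (f (x i ω) (y j ω) - E)} := by
    ext ω
    simp only [Finset.sum_sub_distrib, Finset.sum_const, Finset.card_univ, Fintype.card_fin,
      nsmul_eq_mul, Set.mem_ofPred_eq]
    field_simp
  rw [hset]
  exact (hgrid.measure_ge_le ht.le).trans (exp_le_exp.2 (neg_sq_div_le_grid_exponent hn hm a b t))

/-- Hoeffding-type concentration for grid sampling: for a bounded measurable
`f : S × S → ℝ` and a grid sampling `(x_i, y_j)` built from two independent i.i.d.
families, `ℙ( (1/(nm)) Σ_{i,j} f(x_i,y_j) − 𝔼 f(x_1,y_1) ≥ t ) ≤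
exp(−2nm t² / ((n+m−1)(b−a)²))`. -/
theorem grid_sampling_hoeffding
    {Ω : Type*} [MeasurableSpace Ω] (μ : Measure Ω) [IsProbabilityMeasure μ]
    {S : Type*} [MeasurableSpace S]
    {n m : ℕ} (hn : 0 < n) (hm : 0 < m)
    (x : Fin n → Ω → S) (y : Fin m → Ω → S)
    (hxm : ∀ i, Measurable (x i)) (hym : ∀ j, Measurable (y j))
    (hindep : iIndepFun (β := fun _ : Fin n ⊕ Fin m => S)
        (Sum.elim x y) μ)
    (hxid : ∀ i, IdentDistrib (x i) (x ⟨0, hn⟩) μ μ)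
    (hyid : ∀ j, IdentDistrib (y j) (y ⟨0, hm⟩) μ μ)
    (f : S → S → ℝ) (hf : Measurable fun p : S × S => f p.1 p.2)
    (a b : ℝ) (hab : a < b)
    (hfb : ∀ u v, a ≤ f u v ∧ f u v ≤ b)
    (t : ℝ) (ht : 0 < t) :
    (μ {ω | t ≤ (1 / ((n : ℝ) * m)) * (∑ i, ∑ j, f (x i ω) (y j ω))
        - ∫ ω', f (x ⟨0, hn⟩ ω') (y ⟨0, hm⟩ ω') ∂μ}).toReal ≤
      Real.exp (-2 * n * m * t ^ 2 / (((n : ℝ) + m - 1) * (b - a) ^ 2)) :=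
  grid_sampling_hoeffding_general μ hn hm x y hxm hym hindep hxid hyid f hf a b hfb t ht
end

section
/- Set E := A − B and let ε ∈ (0,1). If |⟨E f, f⟩| ≤ ε ⟨(I − A) f, f⟩ for all f ∈ H, then for every index i ≥ 2 (so that λ_i < 1) one has | (1 − μ_i)/(1 − λ_i) − 1 | ≤ ε; equivalently, (1 − ε)(1 − λ_i) ≤ 1 − μ_i ≤ (1 + ε)(1 − λ_i). -/
open scoped RealInnerProductSpace

/-!
Write `S_t := A + t (I - A)`, whose eigenvalues `λ_j + t (1 - λ_j)` are still decreasing in `j`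
when `t ≤ 1`. The hypothesis says exactly that `S_{-ε} ≤ B ≤ S_ε` as quadratic forms. The `i`-th
eigenvalue of a diagonalisable operator is monotone in the quadratic form: testing against a
nonzero vector in the span of the first `i + 1` eigenvectors of the smaller operator and orthogonal
to the first `i` eigenvectors of the larger one gives it. Hence
`λ_i - ε (1 - λ_i) ≤ μ_i ≤ λ_i + ε (1 - λ_i)`, which is the claim once divided by `1 - λ_i > 0`.
-/

section

variable {H : Type*} [NormedAddCommGroup H] [InnerProductSpace ℝ H]

theorem Orthonormal.exists_ne_zero_inner_eq_zero {w : ℕ → H} (hw : Orthonormal ℝ w)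
    (u : ℕ → H) (i : ℕ) :
    ∃ f : H, f ≠ 0 ∧ (∀ j < i, ⟪u j, f⟫ = 0) ∧ (∀ j, i < j → ⟪w j, f⟫ = 0) := by
  have hg : Orthonormal ℝ fun k : Fin (i + 1) => w k := hw.comp _ Fin.val_injective
  set V : Submodule ℝ H := Submodule.span ℝ (Set.range fun k : Fin (i + 1) => w k)
  have : FiniteDimensional ℝ V := FiniteDimensional.span_of_finite ℝ (Set.finite_range _)
  have hdim : Module.finrank ℝ V = i + 1 := by
    rw [finrank_span_eq_card hg.linearIndependent, Fintype.card_fin]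
  let φ : V →ₗ[ℝ] (Fin i → ℝ) :=
    LinearMap.pi fun j => (innerₛₗ ℝ (u j)).comp V.subtype
  obtain ⟨f, hf, hf0⟩ := Submodule.exists_mem_ne_zero_of_ne_bot <|
    LinearMap.ker_ne_bot_of_finrank_lt (f := φ) (by simp [hdim])
  refine ⟨f, fun h => hf0 (Subtype.ext h), fun j hj => congrFun hf ⟨j, hj⟩, fun j hj => ?_⟩
  have hV : V ≤ (ℝ ∙ w j)ᗮ := Submodule.span_le.mpr <| Set.range_subset_iff.mpr fun k =>
    Submodule.mem_orthogonal_singleton_iff_inner_right.mpr (hw.2 (by omega))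
  exact Submodule.mem_orthogonal_singleton_iff_inner_right.mp (hV f.2)

namespace HilbertBasis

theorem hasSum_eigenvalue_mul_inner_sq {ι : Type*} (b : HilbertBasis ι ℝ H) {T : H →L[ℝ] H}
    {c : ι → ℝ} (hT : ∀ j, T (b j) = c j • b j) (f : H) :
    HasSum (fun j => c j * ⟪b j, f⟫ ^ 2) ⟪T f, f⟫ := by
  have key (j : ι) : ⟪f, T (b.repr f j • b j)⟫ = c j * ⟪b j, f⟫ ^ 2 := by
    rw [map_smul, hT, b.repr_apply_apply, real_inner_smul_right, real_inner_smul_right,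
      real_inner_comm f]
    ring
  rw [real_inner_comm]
  simpa only [innerSL_apply_apply, key] using ((b.hasSum_repr f).mapL T).mapL (innerSL ℝ f)

theorem hasSum_inner_sq {ι : Type*} (b : HilbertBasis ι ℝ H) (f : H) :
    HasSum (fun j => ⟪b j, f⟫ ^ 2) (‖f‖ ^ 2) := by
  simpa [real_inner_self_eq_norm_sq] using
    b.hasSum_eigenvalue_mul_inner_sq (T := ContinuousLinearMap.id ℝ H) (c := 1) (by simp) f

variable (b : HilbertBasis ℕ ℝ H) {T : H →L[ℝ] H} {c : ℕ → ℝ}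

theorem inner_apply_self_le_of_inner_eq_zero (hT : ∀ j, T (b j) = c j • b j) (hc : Antitone c)
    {i : ℕ} {f : H} (hf : ∀ j < i, ⟪b j, f⟫ = 0) : ⟪T f, f⟫ ≤ c i * ‖f‖ ^ 2 := by
  refine hasSum_le (fun j => ?_) (b.hasSum_eigenvalue_mul_inner_sq hT f)
    ((b.hasSum_inner_sq f).mul_left (c i))
  rcases lt_or_ge j i with hj | hj
  · simp [hf j hj]
  · exact mul_le_mul_of_nonneg_right (hc hj) (sq_nonneg _)

theorem le_inner_apply_self_of_inner_eq_zero (hT : ∀ j, T (b j) = c j • b j) (hc : Antitone c)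
    {i : ℕ} {f : H} (hf : ∀ j, i < j → ⟪b j, f⟫ = 0) : c i * ‖f‖ ^ 2 ≤ ⟪T f, f⟫ := by
  refine hasSum_le (fun j => ?_) ((b.hasSum_inner_sq f).mul_left (c i))
    (b.hasSum_eigenvalue_mul_inner_sq hT f)
  rcases le_or_gt j i with hj | hj
  · exact mul_le_mul_of_nonneg_right (hc hj) (sq_nonneg _)
  · simp [hf j hj]

theorem eigenvalue_le_of_forall_inner_apply_self_le (b' : HilbertBasis ℕ ℝ H) {S : H →L[ℝ] H}
    {a : ℕ → ℝ} (hS : ∀ j, S (b j) = a j • b j) (hT : ∀ j, T (b' j) = c j • b' j)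
    (ha : Antitone a) (hc : Antitone c) (hle : ∀ f, ⟪T f, f⟫ ≤ ⟪S f, f⟫) (i : ℕ) :
    c i ≤ a i := by
  obtain ⟨f, hf0, hfb, hfb'⟩ := b'.orthonormal.exists_ne_zero_inner_eq_zero b i
  refine le_of_mul_le_mul_right ?_ (pow_pos (norm_pos_iff.mpr hf0) 2)
  calc c i * ‖f‖ ^ 2 ≤ ⟪T f, f⟫ := b'.le_inner_apply_self_of_inner_eq_zero hT hc hfb'
    _ ≤ ⟪S f, f⟫ := hle f
    _ ≤ a i * ‖f‖ ^ 2 := b.inner_apply_self_le_of_inner_eq_zero hS ha hfb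

end HilbertBasis

variable (A : H →L[ℝ] H) (t : ℝ)

theorem inner_add_smul_id_sub_apply_self (f : H) :
    ⟪(A + t • (ContinuousLinearMap.id ℝ H - A)) f, f⟫ =
      ⟪A f, f⟫ + t * ⟪(ContinuousLinearMap.id ℝ H - A) f, f⟫ := by
  rw [add_apply, smul_apply, inner_add_left, real_inner_smul_left]

theorem add_smul_id_sub_apply_of_apply_eq_smul {x : H} {l : ℝ} (hx : A x = l • x) :
    (A + t • (ContinuousLinearMap.id ℝ H - A)) x = (l + t * (1 - l)) • x := by
  simp only [add_apply, smul_apply, sub_apply, ContinuousLinearMap.id_apply, hx]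
  module

end

theorem Antitone.add_mul_one_sub {α : Type*} [Preorder α] {lam : α → ℝ}
    (hlam : Antitone lam) {t : ℝ} (ht : t ≤ 1) :
    Antitone fun j => lam j + t * (1 - lam j) := by
  intro j k hjk
  nlinarith [hlam hjk]

theorem eigenvalue_ratio_comparison_general
    {H : Type*} [NormedAddCommGroup H] [InnerProductSpace ℝ H] [CompleteSpace H]
    (A B : H →L[ℝ] H)
    (u w : ℕ → H) (lam mu : ℕ → ℝ)
    (hu : Orthonormal ℝ u) (hw : Orthonormal ℝ w)
    (huTotal : ⊤ ≤ (Submodule.span ℝ (Set.range u)).topologicalClosure)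
    (hwTotal : ⊤ ≤ (Submodule.span ℝ (Set.range w)).topologicalClosure)
    (hAu : ∀ j, A (u j) = lam j • u j)
    (hBw : ∀ j, B (w j) = mu j • w j)
    (hlam0 : lam 0 = 1) (hlamAnti : StrictAnti lam)
    (hmuAnti : StrictAnti mu)
    (ε : ℝ) (hε : 0 < ε) (hε1 : ε < 1)
    (hE : ∀ f : H, |⟪(A - B) f, f⟫| ≤ ε * ⟪(ContinuousLinearMap.id ℝ H - A) f, f⟫) :
    ∀ i : ℕ, 1 ≤ i → |(1 - mu i) / (1 - lam i) - 1| ≤ ε := by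
  intro i hi
  set bu := HilbertBasis.mk hu huTotal
  set bw := HilbertBasis.mk hw hwTotal
  have hAb : ∀ j, A (bu j) = lam j • bu j := by simpa only [bu, HilbertBasis.coe_mk] using hAu
  have hBb : ∀ j, B (bw j) = mu j • bw j := by simpa only [bw, HilbertBasis.coe_mk] using hBw
  have hEAB (f : H) : |⟪A f, f⟫ - ⟪B f, f⟫| ≤ ε * ⟪(ContinuousLinearMap.id ℝ H - A) f, f⟫ := by
    rw [← inner_sub_left]
    exact hE f
  have hup : mu i ≤ lam i + ε * (1 - lam i) :=
    bu.eigenvalue_le_of_forall_inner_apply_self_le bw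
      (fun j => add_smul_id_sub_apply_of_apply_eq_smul A ε (hAb j)) hBb
      (hlamAnti.antitone.add_mul_one_sub hε1.le) hmuAnti.antitone
      (fun f => by
        linarith [inner_add_smul_id_sub_apply_self A ε f, (abs_le.mp (hEAB f)).1]) i
  have hlo : lam i + -ε * (1 - lam i) ≤ mu i :=
    bw.eigenvalue_le_of_forall_inner_apply_self_le bu hBb
      (fun j => add_smul_id_sub_apply_of_apply_eq_smul A (-ε) (hAb j)) hmuAnti.antitone
      (hlamAnti.antitone.add_mul_one_sub (by linarith))
      (fun f => by
        linarith [inner_add_smul_id_sub_apply_self A (-ε) f, (abs_le.mp (hEAB f)).2]) i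
  have hgap : 0 < 1 - lam i := by linarith [hlam0 ▸ hlamAnti (Nat.lt_of_succ_le hi)]
  rw [div_sub_one hgap.ne', abs_div, abs_of_pos hgap, div_le_iff₀ hgap, abs_le]
  constructor <;> linarith

/-- Comparison of spectral gaps of two compact self-adjoint operators: if
`|⟨(A−B)f, f⟩| ≤ ε ⟨(I−A)f, f⟩` for all `f`, then for every `i ≥ 1` (so that
`λ_i < 1`), `|(1−μ_i)/(1−λ_i) − 1| ≤ ε`. -/
theorem eigenvalue_ratio_comparison
    {H : Type*} [NormedAddCommGroup H] [InnerProductSpace ℝ H] [CompleteSpace H]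
    [TopologicalSpace.SeparableSpace H]
    (A B : H →L[ℝ] H)
    (hA : IsSelfAdjoint A) (hB : IsSelfAdjoint B)
    (hAc : IsCompactOperator A) (hBc : IsCompactOperator B)
    (u w : ℕ → H) (lam mu : ℕ → ℝ)
    (hu : Orthonormal ℝ u) (hw : Orthonormal ℝ w)
    (huTotal : ⊤ ≤ (Submodule.span ℝ (Set.range u)).topologicalClosure)
    (hwTotal : ⊤ ≤ (Submodule.span ℝ (Set.range w)).topologicalClosure)
    (hAu : ∀ j, A (u j) = lam j • u j)
    (hBw : ∀ j, B (w j) = mu j • w j)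
    (hlam0 : lam 0 = 1) (hlamAnti : StrictAnti lam) (hlamNonneg : ∀ j, 0 ≤ lam j)
    (hmuAnti : StrictAnti mu)
    (ε : ℝ) (hε : 0 < ε) (hε1 : ε < 1)
    (hE : ∀ f : H, |⟪(A - B) f, f⟫| ≤ ε * ⟪(ContinuousLinearMap.id ℝ H - A) f, f⟫) :
    ∀ i : ℕ, 1 ≤ i → |(1 - mu i) / (1 - lam i) - 1| ≤ ε :=
  eigenvalue_ratio_comparison_general A B u w lam mu hu hw huTotal hwTotal hAu hBw hlam0 hlamAnti
    hmuAnti ε hε hε1 hE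
end
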